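/- arXiv:2001.03474 — 11 statements merged into one kernel-verified Lean document; each statement's English description precedes it below -/
import Mathlib

section
/- In a recollement (A, B, C) of abelian categories, for every object B₀ of B there is an exact sequence 0 → K → l(e(B₀)) → B₀ → i(q(B₀)) → 0, where the middle map is the counit of the adjunction l ⊣ e, the right map is the unit of q ⊣ i, and the kernel K lies in the essential image of i. -/
open CategoryTheory CategoryTheory.Limits

universe v₁ v₂ v₃ u₁ u₂ u₃

/-- A recollement of abelian categories `(A, B, C)`: adjoint triples `(q, i, p)` and
`(l, e, r)` with `i`, `l`, `r` fully faithful and the essential image of `i` equal to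
the kernel of `e`. -/
structure AbRecollement (A : Type u₁) (B : Type u₂) (C : Type u₃)
    [Category.{v₁} A] [Category.{v₂} B] [Category.{v₃} C]
    [Abelian A] [Abelian B] [Abelian C] where
  i : A ⥤ B
  e : B ⥤ C
  q : B ⥤ A
  p : B ⥤ A
  l : C ⥤ B
  r : C ⥤ B
  adj_qi : q ⊣ i
  adj_ip : i ⊣ p
  adj_le : l ⊣ e
  adj_er : e ⊣ r
  i_full : i.Full
  i_faithful : i.Faithful
  l_full : l.Full
  l_faithful : l.Faithful
  r_full : r.Full
  r_faithful : r.Faithful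
  essImage_i_eq_ker_e : ∀ X : B, i.essImage X ↔ Limits.IsZero (e.obj X)
/-!
The functor `e` is exact, having adjoints on both sides, and its kernel is the essential image
of `i`. Since `l` is fully faithful, `e` inverts the counit `l e B₀ ⟶ B₀`, so the kernel and
cokernel of the counit lie in the image of `i`; and `e` kills `i q B₀`, so it also kills the
cokernel of the unit `B₀ ⟶ i q B₀`. Maps from `B₀` or `i q B₀` into the image of `i` are
controlled by the unit of `q ⊣ i`: this makes the unit an epimorphism, and identifies it with
the cokernel of the counit.
-/

namespace CategoryTheory

namespace Functor

variable {C D : Type*} [Category C] [Category D] [HasZeroMorphisms C] [HasZeroMorphisms D]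
  (F : C ⥤ D) [F.PreservesZeroMorphisms] {X Y : C} (f : X ⟶ Y)

lemma isZero_obj_kernel_of_mono_map [HasKernel f] [HasKernel (F.map f)]
    [PreservesLimit (parallelPair f 0) F] [Mono (F.map f)] : IsZero (F.obj (Limits.kernel f)) :=
  (isZero_kernel_of_mono (F.map f)).of_iso (PreservesKernel.iso F f)

lemma isZero_obj_cokernel_of_epi_map [HasCokernel f] [HasCokernel (F.map f)]
    [PreservesColimit (parallelPair f 0) F] [Epi (F.map f)] : IsZero (F.obj (Limits.cokernel f)) :=
  (isZero_cokernel_of_epi (F.map f)).of_iso (PreservesCokernel.iso F f)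

end Functor

namespace Adjunction

variable {C D : Type*} [Category C] [Category D] {F : C ⥤ D} {G : D ⥤ C} (adj : F ⊣ G)
  {X T : C}

lemma exists_unit_app_comp_eq_of_mem_essImage (hT : G.essImage T) (f : X ⟶ T) :
    ∃ m : G.obj (F.obj X) ⟶ T, adj.unit.app X ≫ m = f := by
  obtain ⟨Y, ⟨φ⟩⟩ := hT
  refine ⟨G.map ((adj.homEquiv X Y).symm (f ≫ φ.inv)) ≫ φ.hom, ?_⟩
  have := (adj.homEquiv X Y).apply_symm_apply (f ≫ φ.inv)
  rw [adj.homEquiv_unit] at this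
  rw [reassoc_of% this, Iso.inv_hom_id, Category.comp_id]

lemma unit_app_cancel_of_mem_essImage [G.Full] (hT : G.essImage T)
    {g₁ g₂ : G.obj (F.obj X) ⟶ T} (h : adj.unit.app X ≫ g₁ = adj.unit.app X ≫ g₂) : g₁ = g₂ := by
  obtain ⟨Y, ⟨φ⟩⟩ := hT
  obtain ⟨h₁, hh₁⟩ := G.map_surjective (g₁ ≫ φ.inv)
  obtain ⟨h₂, hh₂⟩ := G.map_surjective (g₂ ≫ φ.inv)
  have : h₁ = h₂ := (adj.homEquiv X Y).injective <| by
    simp only [adj.homEquiv_unit, hh₁, hh₂, reassoc_of% h]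
  rw [← cancel_mono φ.inv, ← hh₁, ← hh₂, this]

lemma epi_unit_app_of_cokernel_mem_essImage [Preadditive C] [G.Full]
    [HasCokernel (adj.unit.app X)] (h : G.essImage (cokernel (adj.unit.app X))) :
    Epi (adj.unit.app X) :=
  Preadditive.epi_of_cokernel_zero <| adj.unit_app_cancel_of_mem_essImage h <| by
    rw [cokernel.condition, comp_zero]

end Adjunction

end CategoryTheory

namespace AbRecollement

variable {A B C : Type*} [Category A] [Category B] [Category C]
  [Abelian A] [Abelian B] [Abelian C] (R : AbRecollement A B C)

instance : PreservesFiniteLimits R.e :=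
  have := R.adj_le.isRightAdjoint
  inferInstance

instance : PreservesFiniteColimits R.e :=
  have := R.adj_er.isLeftAdjoint
  inferInstance

instance (X : B) : IsIso (R.e.map (R.adj_le.counit.app X)) :=
  have := R.l_full
  have := R.l_faithful
  inferInstance

lemma isZero_e_obj_i_obj (Y : A) : IsZero (R.e.obj (R.i.obj Y)) :=
  (R.essImage_i_eq_ker_e _).1 (R.i.obj_mem_essImage Y)

lemma counit_comp_unit (X : B) : R.adj_le.counit.app X ≫ R.adj_qi.unit.app X = 0 :=
  (R.adj_le.homEquiv _ _).injective ((R.isZero_e_obj_i_obj _).eq_of_tgt _ _)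

lemma kernel_counit_mem_essImage (X : B) : R.i.essImage (kernel (R.adj_le.counit.app X)) :=
  (R.essImage_i_eq_ker_e _).2 (R.e.isZero_obj_kernel_of_mono_map _)

lemma cokernel_counit_mem_essImage (X : B) : R.i.essImage (cokernel (R.adj_le.counit.app X)) :=
  (R.essImage_i_eq_ker_e _).2 (R.e.isZero_obj_cokernel_of_epi_map _)

lemma epi_unit (X : B) : Epi (R.adj_qi.unit.app X) :=
  have := R.i_full
  have : Epi (R.e.map (R.adj_qi.unit.app X)) := (R.isZero_e_obj_i_obj _).epi _
  R.adj_qi.epi_unit_app_of_cokernel_mem_essImage <|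
    (R.essImage_i_eq_ker_e _).2 (R.e.isZero_obj_cokernel_of_epi_map _)

lemma mono_cokernel_desc_counit_unit (X : B) :
    Mono (cokernel.desc _ _ (R.counit_comp_unit X)) := by
  obtain ⟨m, hm⟩ := R.adj_qi.exists_unit_app_comp_eq_of_mem_essImage
    (R.cokernel_counit_mem_essImage X) (cokernel.π _)
  have : cokernel.desc _ _ (R.counit_comp_unit X) ≫ m = 𝟙 _ := by
    ext
    rw [cokernel.π_desc_assoc, Category.comp_id]
    exact hm
  exact mono_of_mono_fac this

end AbRecollement

/-- In a recollement `(A, B, C)` of abelian categories, for every object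
`B₀` of `B` there is an exact sequence
`0 → K → l(e(B₀)) → B₀ → i(q(B₀)) → 0`,
where the middle map is the counit of `l ⊣ e`, the right map is the unit of `q ⊣ i`,
and the kernel `K` of the counit lies in the essential image of `i`. -/
theorem AbRecollement.canonical_exact_sequence
    {A : Type u₁} {B : Type u₂} {C : Type u₃}
    [Category.{v₁} A] [Category.{v₂} B] [Category.{v₃} C]
    [Abelian A] [Abelian B] [Abelian C]
    (R : AbRecollement A B C) (B₀ : B) :
    Epi (R.adj_qi.unit.app B₀) ∧
    ∃ hzero : R.adj_le.counit.app B₀ ≫ R.adj_qi.unit.app B₀ = 0,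
      (ShortComplex.mk (R.adj_le.counit.app B₀) (R.adj_qi.unit.app B₀) hzero).Exact ∧
      R.i.essImage (Limits.kernel (R.adj_le.counit.app B₀)) :=
  ⟨R.epi_unit B₀, R.counit_comp_unit B₀,
    (ShortComplex.exact_iff_mono_cokernel_desc _).2 (R.mono_cokernel_desc_counit_unit B₀),
    R.kernel_counit_mem_essImage B₀⟩
end

section
/- Let F : T ⥤ S be a triangulated functor with fully faithful right adjoint G. Then F induces a triangle equivalence between the Verdier quotient T / Ker F and S. -/
/-!
A morphism of `T` has its cone in `Ker F` exactly when `F` inverts it, because `F` sends a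
distinguished triangle on that morphism to a distinguished triangle, whose third object vanishes
iff its first morphism is an isomorphism. So the Verdier quotient by `Ker F` is the localization
at the morphisms inverted by `F`, and a left adjoint with fully faithful right adjoint is a
localization at the morphisms it inverts.
-/

open CategoryTheory CategoryTheory.Limits CategoryTheory.Pretriangulated

universe v₁ v₂ u₁ u₂

variable {T : Type u₁} {S : Type u₂} [Category.{v₁} T] [Category.{v₂} S]
  [HasZeroObject T] [HasZeroObject S] [Preadditive T] [Preadditive S]
  [HasShift T ℤ] [HasShift S ℤ]
  [∀ n : ℤ, (CategoryTheory.shiftFunctor T n).Additive]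
  [∀ n : ℤ, (CategoryTheory.shiftFunctor S n).Additive]
  [Pretriangulated T] [Pretriangulated S]

/-- The class of morphisms of `T` whose cone lies in the kernel of `F`; the Verdier
quotient `T / Ker F` is the localization of `T` at this class. -/
def kerVerdierW (F : T ⥤ S) : MorphismProperty T :=
  fun X Y f => ∃ (Z : T) (g : Y ⟶ Z) (h : Z ⟶ X⟦(1 : ℤ)⟧),
    (Triangle.mk f g h ∈ distTriang T) ∧ IsZero (F.obj Z)

lemma mem_kerVerdierW_iff (F : T ⥤ S) [F.CommShift ℤ] [F.IsTriangulated] {X Y : T} (f : X ⟶ Y) :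
    kerVerdierW F f ↔ IsIso (F.map f) := by
  constructor
  · rintro ⟨Z, g, h, hT, hZ⟩
    exact (Triangle.isZero₃_iff_isIso₁ _ (F.map_distinguished _ hT)).1 hZ
  · intro hf
    obtain ⟨Z, g, h, hT⟩ := distinguished_cocone_triangle f
    exact ⟨Z, g, h, hT, (Triangle.isZero₃_iff_isIso₁ _ (F.map_distinguished _ hT)).2 hf⟩

lemma kerVerdierW_eq_inverseImage_isomorphisms (F : T ⥤ S) [F.CommShift ℤ] [F.IsTriangulated] :
    kerVerdierW F = (MorphismProperty.isomorphisms S).inverseImage F := by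
  ext X Y f
  exact mem_kerVerdierW_iff F f

/-- Let `F : T ⥤ S` be a triangulated functor with fully faithful right
adjoint `G`.  Then `F` induces a triangle equivalence between the Verdier quotient
`T / Ker F` and `S`; equivalently, `F` is a localization functor with respect to the
class of morphisms with cone in `Ker F`. -/
theorem verdier_quotient_equivalence_of_fullyFaithful_rightAdjoint
    (F : T ⥤ S) [F.CommShift ℤ] [F.IsTriangulated]
    (G : S ⥤ T) (adj : F ⊣ G) [G.Full] [G.Faithful] :
    F.IsLocalization (kerVerdierW F) := by
  rw [kerVerdierW_eq_inverseImage_isomorphisms F]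
  exact adj.isLocalization
end

section
/- Let (H, F, G) be an adjoint triple of triangulated functors with F : T ⥤ S fully faithful. Then there is a recollement of triangulated categories (T, S, S/Im F); in particular, Ker H = ⊥(Im F), Ker G = (Im F)^⊥, and both are triangle equivalent to the Verdier quotient S / Im F. -/
open CategoryTheory CategoryTheory.Limits CategoryTheory.Pretriangulated

universe v₁ v₂ u₁ u₂

variable {T : Type u₁} {S : Type u₂} [Category.{v₁} T] [Category.{v₂} S]
  [HasZeroObject T] [HasZeroObject S] [Preadditive T] [Preadditive S]
  [HasShift T ℤ] [HasShift S ℤ]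
  [∀ n : ℤ, (CategoryTheory.shiftFunctor T n).Additive]
  [∀ n : ℤ, (CategoryTheory.shiftFunctor S n).Additive]
  [Pretriangulated T] [Pretriangulated S]

/-- The class of morphisms of `S` whose cone lies in the essential image of `F`;
the Verdier quotient `S / Im F` is the localization of `S` at this class. -/
def imVerdierW (F : T ⥤ S) : MorphismProperty S :=
  fun X Y f => ∃ (Z : S) (g : Y ⟶ Z) (h : Z ⟶ X⟦(1 : ℤ)⟧),
    (Triangle.mk f g h ∈ distTriang S) ∧ F.essImage Z

set_option linter.unusedSectionVars false

namespace RecollementAux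

lemma essImage_shift (F : T ⥤ S) [F.CommShift ℤ] {N : S} (hN : F.essImage N) (n : ℤ) :
    F.essImage (N⟦n⟧) := by
  obtain ⟨X, ⟨e⟩⟩ := hN
  exact ⟨X⟦n⟧, ⟨(F.commShiftIso n).app X ≪≫ (shiftFunctor S n).mapIso e⟩⟩

lemma isZero_shift_of_isZero (G : S ⥤ T) [G.CommShift ℤ] {Y : S} (hY : IsZero (G.obj Y))
    (n : ℤ) : IsZero (G.obj (Y⟦n⟧)) := by
  refine IsZero.of_iso ?_ ((G.commShiftIso n).app Y)
  rw [IsZero.iff_id_eq_zero] at hY ⊢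
  have : 𝟙 ((G.obj Y)⟦n⟧) = 0 := by
    rw [← (shiftFunctor T n).map_id, hY, Functor.map_zero]
  exact this

lemma hom_zero_of_essImage_kerG {F : T ⥤ S} {G : S ⥤ T} (adj₂ : F ⊣ G) {N Z : S}
    (hN : F.essImage N) (hZ : IsZero (G.obj Z)) (f : N ⟶ Z) : f = 0 := by
  obtain ⟨X, ⟨e⟩⟩ := hN
  haveI : Subsingleton (X ⟶ G.obj Z) := ⟨fun a b => hZ.eq_of_tgt a b⟩
  haveI : Subsingleton (F.obj X ⟶ Z) := (adj₂.homEquiv X Z).subsingleton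
  calc f = e.inv ≫ (e.hom ≫ f) := by simp
    _ = e.inv ≫ 0 := by rw [Subsingleton.elim (e.hom ≫ f) 0]
    _ = 0 := comp_zero

lemma hom_zero_of_kerH_essImage {H : S ⥤ T} {F : T ⥤ S} (adj₁ : H ⊣ F) {Z N : S}
    (hZ : IsZero (H.obj Z)) (hN : F.essImage N) (f : Z ⟶ N) : f = 0 := by
  obtain ⟨X, ⟨e⟩⟩ := hN
  haveI : Subsingleton (H.obj Z ⟶ X) := ⟨fun a b => hZ.eq_of_src a b⟩
  haveI : Subsingleton (Z ⟶ F.obj X) := (adj₁.homEquiv Z X).symm.subsingleton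
  calc f = (f ≫ e.inv) ≫ e.hom := by simp
    _ = 0 ≫ e.hom := by rw [Subsingleton.elim (f ≫ e.inv) 0]
    _ = 0 := zero_comp

lemma bij_shift {X Y : S} (f : X ⟶ Y) (Z : S)
    (h : Function.Bijective fun (g : Y ⟶ Z⟦(-1:ℤ)⟧) => f ≫ g) :
    Function.Bijective fun (g : Y⟦(1:ℤ)⟧ ⟶ Z) => f⟦(1:ℤ)⟧' ≫ g := by
  let adj := (shiftEquiv S (1:ℤ)).toAdjunction
  have key : (fun (g : Y⟦(1:ℤ)⟧ ⟶ Z) => f⟦(1:ℤ)⟧' ≫ g)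
      = (adj.homEquiv X Z).symm ∘ (fun u => f ≫ u) ∘ (adj.homEquiv Y Z) := by
    funext g
    dsimp only [Function.comp]
    erw [← Adjunction.homEquiv_naturality_left, Equiv.symm_apply_apply]
    rfl
  rw [key]
  exact ((adj.homEquiv X Z).symm.bijective.comp h).comp (adj.homEquiv Y Z).bijective

lemma bij_shift' {X Y : S} (f : X ⟶ Y) (Z : S)
    (h : Function.Bijective fun (g : Z⟦(-1:ℤ)⟧ ⟶ X) => g ≫ f) :
    Function.Bijective fun (g : Z ⟶ X⟦(1:ℤ)⟧) => g ≫ f⟦(1:ℤ)⟧' := by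
  let adj := (shiftEquiv S (-1:ℤ)).toAdjunction
  have key : (fun (g : Z ⟶ X⟦(1:ℤ)⟧) => g ≫ f⟦(1:ℤ)⟧')
      = (adj.homEquiv Z Y) ∘ (fun u => u ≫ f) ∘ (adj.homEquiv Z X).symm := by
    funext g
    dsimp only [Function.comp]
    erw [Adjunction.homEquiv_naturality_right, Equiv.apply_symm_apply]
    rfl
  rw [key]
  exact ((adj.homEquiv Z Y).bijective.comp h).comp (adj.homEquiv Z X).symm.bijective


lemma bij_precomp_of_imVerdierW {F : T ⥤ S} {G : S ⥤ T} (adj₂ : F ⊣ G) [F.CommShift ℤ]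
    {X Y : S} (f : X ⟶ Y) (hf : imVerdierW F f) {Z : S} (hZ : IsZero (G.obj Z)) :
    Function.Bijective fun (g : Y ⟶ Z) => f ≫ g := by
  obtain ⟨N, a, c, hT, hN⟩ := hf
  constructor
  · intro g₁ g₂ hg
    have h0 : f ≫ (g₁ - g₂) = 0 := by
      rw [Preadditive.comp_sub, sub_eq_zero]; exact hg
    obtain ⟨h, hh⟩ := Triangle.yoneda_exact₂ _ hT (g₁ - g₂) h0
    erw [hom_zero_of_essImage_kerG adj₂ hN hZ h, comp_zero] at hh
    exact sub_eq_zero.1 hh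
  · intro g
    have hT' := inv_rot_of_distTriang _ hT
    have h0 : (Triangle.mk f a c).invRotate.mor₁ ≫ g = 0 :=
      hom_zero_of_essImage_kerG adj₂ (essImage_shift F hN (-1)) hZ _
    obtain ⟨h, hh⟩ := Triangle.yoneda_exact₂ _ hT' g h0
    exact ⟨h, hh.symm⟩

lemma bij_postcomp_of_imVerdierW {H : S ⥤ T} {F : T ⥤ S} (adj₁ : H ⊣ F) [F.CommShift ℤ]
    {X Y : S} (f : X ⟶ Y) (hf : imVerdierW F f) {Z : S} (hZ : IsZero (H.obj Z)) :
    Function.Bijective fun (g : Z ⟶ X) => g ≫ f := by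
  obtain ⟨N, a, c, hT, hN⟩ := hf
  have hT' := inv_rot_of_distTriang _ hT
  constructor
  · intro g₁ g₂ hg
    have h0 : (g₁ - g₂) ≫ (Triangle.mk f a c).invRotate.mor₂ = 0 := by
      show (g₁ - g₂) ≫ f = 0
      rw [Preadditive.sub_comp, sub_eq_zero]; exact hg
    obtain ⟨h, hh⟩ := Triangle.coyoneda_exact₂ _ hT' (g₁ - g₂) h0
    erw [hom_zero_of_kerH_essImage adj₁ hZ (essImage_shift F hN (-1)) h, zero_comp] at hh
    exact sub_eq_zero.1 hh
  · intro g
    have h0 : g ≫ (Triangle.mk f a c).mor₂ = 0 :=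
      hom_zero_of_kerH_essImage adj₁ hZ hN _
    obtain ⟨u, hu⟩ := Triangle.coyoneda_exact₂ _ hT g h0
    exact ⟨u, hu.symm⟩

lemma imVerdierW_of_bij_G {F : T ⥤ S} {G : S ⥤ T} (adj₂ : F ⊣ G)
    [F.CommShift ℤ] [G.CommShift ℤ] [G.IsTriangulated] [F.Full] [F.Faithful]
    {X Y : S} (f : X ⟶ Y)
    (h : ∀ Z : S, IsZero (G.obj Z) → Function.Bijective fun (g : Y ⟶ Z) => f ≫ g) :
    imVerdierW F f := by
  obtain ⟨N, a, c, hT⟩ := distinguished_cocone_triangle f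
  have z12 : f ≫ a = 0 := comp_distTriang_mor_zero₁₂ _ hT
  have z31 : c ≫ f⟦(1:ℤ)⟧' = 0 := comp_distTriang_mor_zero₃₁ _ hT
  have hNZ : ∀ (Z : S), IsZero (G.obj Z) → ∀ (g : N ⟶ Z), g = 0 := by
    intro Z hZ g
    have h2 : a ≫ g = 0 := by
      apply (h Z hZ).1
      show f ≫ a ≫ g = f ≫ 0
      rw [comp_zero, ← Category.assoc, z12, zero_comp]
    obtain ⟨h', hh'⟩ := Triangle.yoneda_exact₃ _ hT g h2
    have hh'' : g = c ≫ h' := hh'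
    obtain ⟨k, hk⟩ := (bij_shift f Z (h _ (isZero_shift_of_isZero G hZ (-1)))).2 h'
    have hk' : f⟦(1:ℤ)⟧' ≫ k = h' := hk
    rw [hh'', ← hk', ← Category.assoc, z31, zero_comp]
  obtain ⟨C, w, δ, hTC⟩ := distinguished_cocone_triangle (adj₂.counit.app N)
  have hGε : IsIso (G.map (adj₂.counit.app N)) := by
    haveI : IsIso (adj₂.unit.app (G.obj N) ≫ G.map (adj₂.counit.app N)) := by
      rw [adj₂.right_triangle_components]; exact IsIso.id _
    exact IsIso.of_isIso_comp_left (adj₂.unit.app (G.obj N)) _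
  have hC : IsZero (G.obj C) :=
    Triangle.isZero₃_of_isIso₁ _ (G.map_distinguished _ hTC) hGε
  have hw : w = 0 := hNZ C hC w
  have hid : 𝟙 C = 0 := by
    obtain ⟨h', hh'⟩ := Triangle.yoneda_exact₂ _
      (rot_of_distTriang _ hTC) (𝟙 C) (by
        show w ≫ 𝟙 C = 0
        rw [hw, zero_comp])
    erw [hom_zero_of_essImage_kerG adj₂ (essImage_shift F ⟨G.obj N, ⟨Iso.refl _⟩⟩ 1) hC h',
      comp_zero] at hh'
    exact hh'
  have hCz : IsZero C := by rw [IsZero.iff_id_eq_zero]; exact hid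
  haveI : IsIso (adj₂.counit.app N) := (Triangle.isZero₃_iff_isIso₁ _ hTC).1 hCz
  exact ⟨N, a, c, hT, ⟨G.obj N, ⟨asIso (adj₂.counit.app N)⟩⟩⟩

lemma imVerdierW_of_bij_H {H : S ⥤ T} {F : T ⥤ S} (adj₁ : H ⊣ F)
    [F.CommShift ℤ] [H.CommShift ℤ] [H.IsTriangulated] [F.Full] [F.Faithful]
    {X Y : S} (f : X ⟶ Y)
    (h : ∀ Z : S, IsZero (H.obj Z) → Function.Bijective fun (g : Z ⟶ X) => g ≫ f) :
    imVerdierW F f := by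
  obtain ⟨N, a, c, hT⟩ := distinguished_cocone_triangle f
  have z12 : f ≫ a = 0 := comp_distTriang_mor_zero₁₂ _ hT
  have z31 : c ≫ f⟦(1:ℤ)⟧' = 0 := comp_distTriang_mor_zero₃₁ _ hT
  have hZN : ∀ (Z : S), IsZero (H.obj Z) → ∀ (g : Z ⟶ N), g = 0 := by
    intro Z hZ g
    have h2 : g ≫ c = 0 := by
      apply (bij_shift' f Z (h _ (isZero_shift_of_isZero H hZ (-1)))).1
      show (g ≫ c) ≫ f⟦(1:ℤ)⟧' = 0 ≫ f⟦(1:ℤ)⟧'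
      rw [zero_comp, Category.assoc, z31, comp_zero]
    obtain ⟨u, hu⟩ := Triangle.coyoneda_exact₃ _ hT g h2
    have hu' : g = u ≫ a := hu
    obtain ⟨v, hv⟩ := (h Z hZ).2 u
    have hv' : v ≫ f = u := hv
    erw [hu', ← hv', Category.assoc, z12, comp_zero]
  obtain ⟨C, w, δ, hTC⟩ := distinguished_cocone_triangle₁ (adj₁.unit.app N)
  have hHη : IsIso (H.map (adj₁.unit.app N)) := by
    haveI : IsIso (H.map (adj₁.unit.app N) ≫ adj₁.counit.app (H.obj N)) := by
      erw [adj₁.left_triangle_components]; exact IsIso.id _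
    exact IsIso.of_isIso_comp_right _ (adj₁.counit.app (H.obj N))
  have hC : IsZero (H.obj C) :=
    (Triangle.isZero₁_iff_isIso₂ _ (H.map_distinguished _ hTC)).2 hHη
  have hw : w = 0 := hZN C hC w
  have hid : 𝟙 C = 0 := by
    obtain ⟨h', hh'⟩ := Triangle.coyoneda_exact₂ _
      (inv_rot_of_distTriang _ hTC) (𝟙 C) (by
        show 𝟙 C ≫ w = 0
        rw [hw, comp_zero])
    erw [hom_zero_of_kerH_essImage adj₁ hC
      (essImage_shift F ⟨H.obj N, ⟨Iso.refl _⟩⟩ (-1)) h', zero_comp] at hh'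
    exact hh'
  have hCz : IsZero C := by rw [IsZero.iff_id_eq_zero]; exact hid
  haveI : IsIso (adj₁.unit.app N) := (Triangle.isZero₁_iff_isIso₂ _ hTC).1 hCz
  exact ⟨N, a, c, hT, ⟨H.obj N, ⟨(asIso (adj₁.unit.app N)).symm⟩⟩⟩



section Constructions

variable (H : S ⥤ T) (F : T ⥤ S) (G : S ⥤ T)
  [H.CommShift ℤ] [F.CommShift ℤ] [G.CommShift ℤ]
  [H.IsTriangulated] [F.IsTriangulated] [G.IsTriangulated]
  (adj₁ : H ⊣ F) (adj₂ : F ⊣ G) [F.Full] [F.Faithful]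

/-! ### The reflection onto `Ker G` -/

noncomputable def rcone (Y : S) : S :=
  (distinguished_cocone_triangle (adj₂.counit.app Y)).choose

noncomputable def rπ (Y : S) : Y ⟶ rcone F G adj₂ Y :=
  (distinguished_cocone_triangle (adj₂.counit.app Y)).choose_spec.choose

noncomputable def rδ (Y : S) : rcone F G adj₂ Y ⟶ (F.obj (G.obj Y))⟦(1:ℤ)⟧ :=
  (distinguished_cocone_triangle (adj₂.counit.app Y)).choose_spec.choose_spec.choose

lemma rtri (Y : S) :
    Triangle.mk (adj₂.counit.app Y) (rπ F G adj₂ Y) (rδ F G adj₂ Y) ∈ distTriang S :=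
  (distinguished_cocone_triangle (adj₂.counit.app Y)).choose_spec.choose_spec.choose_spec

lemma isZero_G_rcone (Y : S) : IsZero (G.obj (rcone F G adj₂ Y)) := by
  have hGε : IsIso (G.map (adj₂.counit.app Y)) := by
    haveI : IsIso (adj₂.unit.app (G.obj Y) ≫ G.map (adj₂.counit.app Y)) := by
      rw [adj₂.right_triangle_components]; exact IsIso.id _
    exact IsIso.of_isIso_comp_left (adj₂.unit.app (G.obj Y)) _
  exact Triangle.isZero₃_of_isIso₁ _ (G.map_distinguished _ (rtri F G adj₂ Y)) hGε

noncomputable def robj (Y : S) : ObjectProperty.FullSubcategory (fun Y : S => IsZero (G.obj Y)) :=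
  ⟨rcone F G adj₂ Y, isZero_G_rcone F G adj₂ Y⟩

noncomputable def rHomEquiv (Y : S) (Z : ObjectProperty.FullSubcategory (fun Y : S => IsZero (G.obj Y))) :
    (robj F G adj₂ Y ⟶ Z) ≃
      (Y ⟶ (ObjectProperty.ι (fun Y : S => IsZero (G.obj Y))).obj Z) :=
  Equiv.ofBijective
    (fun t => rπ F G adj₂ Y ≫
      (ObjectProperty.ι (fun Y : S => IsZero (G.obj Y))).map t) (by
    constructor
    · intro t₁ t₂ ht
      have ht' : rπ F G adj₂ Y ≫ ((ObjectProperty.ι _).map t₁ -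
          (ObjectProperty.ι _).map t₂) = 0 := by
        erw [Preadditive.comp_sub, sub_eq_zero]; exact ht
      obtain ⟨g, hg⟩ := Triangle.yoneda_exact₃ _ (rtri F G adj₂ Y) _ ht'
      erw [hom_zero_of_essImage_kerG adj₂
        (essImage_shift F ⟨G.obj Y, ⟨Iso.refl _⟩⟩ 1) Z.property g, comp_zero] at hg
      exact (ObjectProperty.ι _).map_injective (sub_eq_zero.1 hg)
    · intro g
      have h0 : adj₂.counit.app Y ≫ g = 0 :=
        hom_zero_of_essImage_kerG adj₂ ⟨G.obj Y, ⟨Iso.refl _⟩⟩ Z.property _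
      obtain ⟨t, ht⟩ := Triangle.yoneda_exact₂ _ (rtri F G adj₂ Y) g h0
      exact ⟨ObjectProperty.homMk t, ht.symm⟩)

lemma rhe (Y : S) (Z Z' : ObjectProperty.FullSubcategory (fun Y : S => IsZero (G.obj Y)))
    (g : Z ⟶ Z') (h : robj F G adj₂ Y ⟶ Z) :
    rHomEquiv F G adj₂ Y Z' (h ≫ g) = rHomEquiv F G adj₂ Y Z h ≫
      (ObjectProperty.ι (fun Y : S => IsZero (G.obj Y))).map g := by
  show rπ F G adj₂ Y ≫ (ObjectProperty.ι _).map (h ≫ g)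
    = (rπ F G adj₂ Y ≫ (ObjectProperty.ι _).map h) ≫ (ObjectProperty.ι _).map g
  erw [Functor.map_comp, Category.assoc]
  rfl

noncomputable def RFunctor : S ⥤ ObjectProperty.FullSubcategory (fun Y : S => IsZero (G.obj Y)) :=
  Adjunction.leftAdjointOfEquiv (rHomEquiv F G adj₂) (rhe F G adj₂)

noncomputable def adjR : RFunctor F G adj₂ ⊣
    ObjectProperty.ι (fun Y : S => IsZero (G.obj Y)) :=
  Adjunction.adjunctionOfEquivLeft (rHomEquiv F G adj₂) (rhe F G adj₂)

lemma R_isLocalization : (RFunctor F G adj₂).IsLocalization (imVerdierW F) := by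
  have h := ObjectProperty.isLocalization_isLocal (adjR F G adj₂)
  have heq : ObjectProperty.isLocal
      (· ∈ Set.range (ObjectProperty.ι (fun Y : S => IsZero (G.obj Y))).obj)
      = imVerdierW F := by
    ext X Y f
    constructor
    · intro hf
      exact imVerdierW_of_bij_G adj₂ f (fun Z hZ => hf Z ⟨⟨Z, hZ⟩, rfl⟩)
    · rintro hf Z ⟨⟨Z', hZ'⟩, rfl⟩
      exact bij_precomp_of_imVerdierW adj₂ f hf hZ'
  rwa [heq] at h


/-! ### The coreflection onto `Ker H` -/

noncomputable def lcone (Y : S) : S :=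
  (distinguished_cocone_triangle₁ (adj₁.unit.app Y)).choose

noncomputable def lι (Y : S) : lcone H F adj₁ Y ⟶ Y :=
  (distinguished_cocone_triangle₁ (adj₁.unit.app Y)).choose_spec.choose

noncomputable def lδ (Y : S) : F.obj (H.obj Y) ⟶ (lcone H F adj₁ Y)⟦(1:ℤ)⟧ :=
  (distinguished_cocone_triangle₁ (adj₁.unit.app Y)).choose_spec.choose_spec.choose

lemma ltri (Y : S) :
    Triangle.mk (lι H F adj₁ Y) (adj₁.unit.app Y) (lδ H F adj₁ Y) ∈ distTriang S :=
  (distinguished_cocone_triangle₁ (adj₁.unit.app Y)).choose_spec.choose_spec.choose_spec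

lemma isZero_H_lcone (Y : S) : IsZero (H.obj (lcone H F adj₁ Y)) := by
  have hHη : IsIso (H.map (adj₁.unit.app Y)) := by
    haveI : IsIso (H.map (adj₁.unit.app Y) ≫ adj₁.counit.app (H.obj Y)) := by
      erw [adj₁.left_triangle_components]; exact IsIso.id _
    exact IsIso.of_isIso_comp_right _ (adj₁.counit.app (H.obj Y))
  exact (Triangle.isZero₁_iff_isIso₂ _ (H.map_distinguished _ (ltri H F adj₁ Y))).2 hHη

noncomputable def lobj (Y : S) : ObjectProperty.FullSubcategory (fun Y : S => IsZero (H.obj Y)) :=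
  ⟨lcone H F adj₁ Y, isZero_H_lcone H F adj₁ Y⟩

noncomputable def lHomEquivAux (Z : ObjectProperty.FullSubcategory (fun Y : S => IsZero (H.obj Y))) (Y : S) :
    (Z ⟶ lobj H F adj₁ Y) ≃
      ((ObjectProperty.ι (fun Y : S => IsZero (H.obj Y))).obj Z ⟶ Y) :=
  Equiv.ofBijective
    (fun t => (ObjectProperty.ι (fun Y : S => IsZero (H.obj Y))).map t ≫
      lι H F adj₁ Y) (by
    constructor
    · intro t₁ t₂ ht
      have ht' : ((ObjectProperty.ι _).map t₁ -
          (ObjectProperty.ι _).map t₂) ≫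
          (Triangle.mk (lι H F adj₁ Y) (adj₁.unit.app Y)
            (lδ H F adj₁ Y)).invRotate.mor₂ = 0 := by
        show ((ObjectProperty.ι _).map t₁ -
          (ObjectProperty.ι _).map t₂) ≫ lι H F adj₁ Y = 0
        erw [Preadditive.sub_comp, sub_eq_zero]; exact ht
      obtain ⟨g, hg⟩ := Triangle.coyoneda_exact₂ _
        (inv_rot_of_distTriang _ (ltri H F adj₁ Y)) _ ht'
      erw [hom_zero_of_kerH_essImage adj₁ Z.property
        (essImage_shift F ⟨H.obj Y, ⟨Iso.refl _⟩⟩ (-1)) g, zero_comp] at hg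
      exact (ObjectProperty.ι _).map_injective (sub_eq_zero.1 hg)
    · intro g
      have h0 : g ≫ adj₁.unit.app Y = 0 :=
        hom_zero_of_kerH_essImage adj₁ Z.property ⟨H.obj Y, ⟨Iso.refl _⟩⟩ _
      obtain ⟨t, ht⟩ := Triangle.coyoneda_exact₂ _ (ltri H F adj₁ Y) g h0
      exact ⟨ObjectProperty.homMk t, ht.symm⟩)

noncomputable def lHomEquiv (Z : ObjectProperty.FullSubcategory (fun Y : S => IsZero (H.obj Y))) (Y : S) :
    ((ObjectProperty.ι (fun Y : S => IsZero (H.obj Y))).obj Z ⟶ Y) ≃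
      (Z ⟶ lobj H F adj₁ Y) :=
  (lHomEquivAux H F adj₁ Z Y).symm

lemma lhe (Z' Z : ObjectProperty.FullSubcategory (fun Y : S => IsZero (H.obj Y))) (Y : S)
    (f : Z' ⟶ Z)
    (g : (ObjectProperty.ι (fun Y : S => IsZero (H.obj Y))).obj Z ⟶ Y) :
    lHomEquiv H F adj₁ Z' Y
        ((ObjectProperty.ι (fun Y : S => IsZero (H.obj Y))).map f ≫ g)
      = f ≫ lHomEquiv H F adj₁ Z Y g := by
  have hg : (ObjectProperty.ι (fun Y : S => IsZero (H.obj Y))).map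
      ((lHomEquivAux H F adj₁ Z Y).symm g) ≫ lι H F adj₁ Y = g :=
    (lHomEquivAux H F adj₁ Z Y).apply_symm_apply g
  have key : lHomEquivAux H F adj₁ Z' Y (f ≫ (lHomEquivAux H F adj₁ Z Y).symm g)
      = (ObjectProperty.ι (fun Y : S => IsZero (H.obj Y))).map f ≫ g := by
    show (ObjectProperty.ι _).map (f ≫ (lHomEquivAux H F adj₁ Z Y).symm g) ≫
      lι H F adj₁ Y = (ObjectProperty.ι _).map f ≫ g
    erw [Functor.map_comp, Category.assoc, hg]
  exact (Equiv.symm_apply_eq _).mpr key.symm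

noncomputable def LFunctor : S ⥤ ObjectProperty.FullSubcategory (fun Y : S => IsZero (H.obj Y)) :=
  Adjunction.rightAdjointOfEquiv (lHomEquiv H F adj₁) (lhe H F adj₁)

noncomputable def adjL : ObjectProperty.ι (fun Y : S => IsZero (H.obj Y)) ⊣
    LFunctor H F adj₁ :=
  Adjunction.adjunctionOfEquivRight (lHomEquiv H F adj₁) (lhe H F adj₁)

lemma L_inverts : (imVerdierW F).IsInvertedBy (LFunctor H F adj₁) := by
  intro X Y f hf
  have hbij : ∀ (W : ObjectProperty.FullSubcategory (fun Y : S => IsZero (H.obj Y))),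
      Function.Bijective (fun (u : W ⟶ (LFunctor H F adj₁).obj X) =>
        u ≫ (LFunctor H F adj₁).map f) := by
    intro W
    have key : (fun (u : W ⟶ (LFunctor H F adj₁).obj X) =>
        u ≫ (LFunctor H F adj₁).map f)
        = ((adjL H F adj₁).homEquiv W Y) ∘ (fun v => v ≫ f) ∘
          ((adjL H F adj₁).homEquiv W X).symm := by
      funext u
      dsimp only [Function.comp]
      rw [Adjunction.homEquiv_naturality_right, Equiv.apply_symm_apply]
    rw [key]
    exact (((adjL H F adj₁).homEquiv W Y).bijective.comp
      (bij_postcomp_of_imVerdierW adj₁ f hf W.property)).comp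
      ((adjL H F adj₁).homEquiv W X).symm.bijective
  obtain ⟨g, hg⟩ := (hbij ((LFunctor H F adj₁).obj Y)).2 (𝟙 _)
  have hg' : g ≫ (LFunctor H F adj₁).map f = 𝟙 _ := hg
  have hfg : (LFunctor H F adj₁).map f ≫ g = 𝟙 _ := by
    apply (hbij ((LFunctor H F adj₁).obj X)).1
    show ((LFunctor H F adj₁).map f ≫ g) ≫ (LFunctor H F adj₁).map f
      = 𝟙 _ ≫ (LFunctor H F adj₁).map f
    rw [Category.assoc, hg', Category.comp_id, Category.id_comp]
  exact ⟨g, hfg, hg'⟩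

lemma counitL_mem (Y : S) : imVerdierW F ((adjL H F adj₁).counit.app Y) := by
  refine imVerdierW_of_bij_H adj₁ _ (fun Z hZ => ?_)
  exact (((adjL H F adj₁).homEquiv ⟨Z, hZ⟩ Y).symm.bijective.comp
    ⟨fun a b hab => congrArg InducedCategory.Hom.hom hab, fun t => ⟨t.hom, rfl⟩⟩)

lemma unitR_mem (Y : S) : imVerdierW F ((adjR F G adj₂).unit.app Y) := by
  refine imVerdierW_of_bij_G adj₂ _ (fun Z hZ => ?_)
  exact ((adjR F G adj₂).homEquiv Y ⟨Z, hZ⟩).bijective.comp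
    ⟨fun a b hab => congrArg InducedCategory.Hom.hom hab, fun t => ⟨t.hom, rfl⟩⟩


/-! ### The equivalence `Ker G ≌ Ker H` -/

noncomputable def thetaNat :
    (ObjectProperty.ι (fun Y : S => IsZero (G.obj Y)) ⋙ LFunctor H F adj₁) ⋙
      (ObjectProperty.ι (fun Y : S => IsZero (H.obj Y)) ⋙ RFunctor F G adj₂) ⟶
      𝟭 (ObjectProperty.FullSubcategory (fun Y : S => IsZero (G.obj Y))) where
  app Z := (RFunctor F G adj₂).map ((adjL H F adj₁).counit.app
      ((ObjectProperty.ι (fun Y : S => IsZero (G.obj Y))).obj Z)) ≫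
    (adjR F G adj₂).counit.app Z
  naturality {Z Z'} φ := by
    have h1 : (ObjectProperty.ι (fun Y : S => IsZero (H.obj Y))).map
        ((LFunctor H F adj₁).map ((ObjectProperty.ι _).map φ)) ≫
        (adjL H F adj₁).counit.app ((ObjectProperty.ι _).obj Z')
        = (adjL H F adj₁).counit.app ((ObjectProperty.ι _).obj Z) ≫
          (ObjectProperty.ι (fun Y : S => IsZero (G.obj Y))).map φ := by
      simpa using (adjL H F adj₁).counit.naturality
        ((ObjectProperty.ι (fun Y : S => IsZero (G.obj Y))).map φ)
    have h2 : (RFunctor F G adj₂).map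
        ((ObjectProperty.ι (fun Y : S => IsZero (G.obj Y))).map φ) ≫
        (adjR F G adj₂).counit.app Z' = (adjR F G adj₂).counit.app Z ≫ φ := by
      simpa using (adjR F G adj₂).counit.naturality φ
    dsimp only [Functor.comp_obj, Functor.comp_map, Functor.id_obj, Functor.id_map]
    rw [← Category.assoc, ← Functor.map_comp, h1, Functor.map_comp, Category.assoc, h2,
      ← Category.assoc]

noncomputable def psiNat :
    𝟭 (ObjectProperty.FullSubcategory (fun Y : S => IsZero (H.obj Y))) ⟶
      (ObjectProperty.ι (fun Y : S => IsZero (H.obj Y)) ⋙ RFunctor F G adj₂) ⋙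
        (ObjectProperty.ι (fun Y : S => IsZero (G.obj Y)) ⋙ LFunctor H F adj₁) where
  app W := (adjL H F adj₁).unit.app W ≫
    (LFunctor H F adj₁).map ((adjR F G adj₂).unit.app
      ((ObjectProperty.ι (fun Y : S => IsZero (H.obj Y))).obj W))
  naturality {W W'} φ := by
    have h1 : φ ≫ (adjL H F adj₁).unit.app W' = (adjL H F adj₁).unit.app W ≫
        (LFunctor H F adj₁).map ((ObjectProperty.ι _).map φ) := by
      simpa using (adjL H F adj₁).unit.naturality φ
    have h2 : (ObjectProperty.ι (fun Y : S => IsZero (H.obj Y))).map φ ≫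
        (adjR F G adj₂).unit.app ((ObjectProperty.ι _).obj W')
        = (adjR F G adj₂).unit.app ((ObjectProperty.ι _).obj W) ≫
          (ObjectProperty.ι (fun Y : S => IsZero (G.obj Y))).map
            ((RFunctor F G adj₂).map ((ObjectProperty.ι _).map φ)) := by
      simpa using (adjR F G adj₂).unit.naturality
        ((ObjectProperty.ι (fun Y : S => IsZero (H.obj Y))).map φ)
    dsimp only [Functor.comp_obj, Functor.comp_map, Functor.id_obj, Functor.id_map]
    rw [← Category.assoc, h1, Category.assoc, ← Functor.map_comp, h2, Functor.map_comp,
      ← Category.assoc]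

noncomputable def EGH : ObjectProperty.FullSubcategory (fun Y : S => IsZero (G.obj Y)) ≌
    ObjectProperty.FullSubcategory (fun Y : S => IsZero (H.obj Y)) := by
  haveI := R_isLocalization F G adj₂
  haveI ha : ∀ Z, IsIso ((thetaNat H F G adj₁ adj₂).app Z) := by
    intro Z
    haveI : IsIso ((RFunctor F G adj₂).map ((adjL H F adj₁).counit.app
        ((ObjectProperty.ι (fun Y : S => IsZero (G.obj Y))).obj Z))) :=
      Localization.inverts (RFunctor F G adj₂) (imVerdierW F) _ (counitL_mem H F adj₁ _)
    haveI : IsIso ((adjR F G adj₂).counit.app Z) := inferInstance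
    show IsIso ((RFunctor F G adj₂).map ((adjL H F adj₁).counit.app
      ((ObjectProperty.ι (fun Y : S => IsZero (G.obj Y))).obj Z)) ≫
        (adjR F G adj₂).counit.app Z)
    infer_instance
  haveI hb : ∀ W, IsIso ((psiNat H F G adj₁ adj₂).app W) := by
    intro W
    haveI : IsIso ((adjL H F adj₁).unit.app W) := inferInstance
    haveI : IsIso ((LFunctor H F adj₁).map ((adjR F G adj₂).unit.app
        ((ObjectProperty.ι (fun Y : S => IsZero (H.obj Y))).obj W))) :=
      L_inverts H F adj₁ _ (unitR_mem F G adj₂ _)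
    show IsIso ((adjL H F adj₁).unit.app W ≫
      (LFunctor H F adj₁).map ((adjR F G adj₂).unit.app
        ((ObjectProperty.ι (fun Y : S => IsZero (H.obj Y))).obj W)))
    infer_instance
  haveI : IsIso (thetaNat H F G adj₁ adj₂) := NatIso.isIso_of_isIso_app _
  haveI : IsIso (psiNat H F G adj₁ adj₂) := NatIso.isIso_of_isIso_app _
  exact CategoryTheory.Equivalence.mk
    (ObjectProperty.ι (fun Y : S => IsZero (G.obj Y)) ⋙ LFunctor H F adj₁)
    (ObjectProperty.ι (fun Y : S => IsZero (H.obj Y)) ⋙ RFunctor F G adj₂)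
    (asIso (thetaNat H F G adj₁ adj₂)).symm (asIso (psiNat H F G adj₁ adj₂)).symm

end Constructions

end RecollementAux

/-- Let `(H, F, G)` be an adjoint triple of triangulated functors with
`F : T ⥤ S` fully faithful.  Then there is a recollement of triangulated categories
`(T, S, S/Im F)`: in particular `Ker H = ⊥(Im F)`, `Ker G = (Im F)^⊥`, the Verdier
quotient functor `S ⥤ S/Im F` admits fully faithful left and right adjoints, and both
`Ker H` and `Ker G` are equivalent to the Verdier quotient `S / Im F`. -/
theorem recollement_of_adjoint_triple_fullyFaithful
    (H : S ⥤ T) (F : T ⥤ S) (G : S ⥤ T)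
    [H.CommShift ℤ] [F.CommShift ℤ] [G.CommShift ℤ]
    [H.IsTriangulated] [F.IsTriangulated] [G.IsTriangulated]
    (adj₁ : H ⊣ F) (adj₂ : F ⊣ G) [F.Full] [F.Faithful] :
    -- `Ker H = ⊥(Im F)`
    (∀ Y : S, IsZero (H.obj Y) ↔ ∀ (X : T) (f : Y ⟶ F.obj X), f = 0) ∧
    -- `Ker G = (Im F)^⊥`
    (∀ Y : S, IsZero (G.obj Y) ↔ ∀ (X : T) (f : F.obj X ⟶ Y), f = 0) ∧
    -- the Verdier quotient functor has fully faithful left and right adjoints,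
    -- yielding the recollement `(T, S, S/Im F)`
    (∃ (lq : (imVerdierW F).Localization ⥤ S) (rq : (imVerdierW F).Localization ⥤ S),
      Nonempty (lq ⊣ (imVerdierW F).Q) ∧ Nonempty ((imVerdierW F).Q ⊣ rq) ∧
      lq.Full ∧ lq.Faithful ∧ rq.Full ∧ rq.Faithful) ∧
    -- `Ker H ≃ S/Im F`
    ((ObjectProperty.ι (fun Y : S => IsZero (H.obj Y)) ⋙
        (imVerdierW F).Q).IsEquivalence) ∧
    -- `Ker G ≃ S/Im F`
    ((ObjectProperty.ι (fun Y : S => IsZero (G.obj Y)) ⋙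
        (imVerdierW F).Q).IsEquivalence) := by

  have part1 : ∀ Y : S, IsZero (H.obj Y) ↔ ∀ (X : T) (f : Y ⟶ F.obj X), f = 0 := by
    intro Y
    constructor
    · intro hY X f
      exact RecollementAux.hom_zero_of_kerH_essImage adj₁ hY ⟨X, ⟨Iso.refl _⟩⟩ f
    · intro hY
      rw [IsZero.iff_id_eq_zero]
      have h := adj₁.left_triangle_components Y
      rw [hY _ (adj₁.unit.app Y), Functor.map_zero, zero_comp] at h
      exact h.symm
  have part2 : ∀ Y : S, IsZero (G.obj Y) ↔ ∀ (X : T) (f : F.obj X ⟶ Y), f = 0 := by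
    intro Y
    constructor
    · intro hY X f
      exact RecollementAux.hom_zero_of_essImage_kerG adj₂ ⟨X, ⟨Iso.refl _⟩⟩ hY f
    · intro hY
      rw [IsZero.iff_id_eq_zero]
      have h := adj₂.right_triangle_components Y
      rw [hY _ (adj₂.counit.app Y), Functor.map_zero, comp_zero] at h
      exact h.symm
  haveI := RecollementAux.R_isLocalization F G adj₂
  let R := RecollementAux.RFunctor F G adj₂
  let L := RecollementAux.LFunctor H F adj₁
  let E := Localization.uniq R (imVerdierW F).Q (imVerdierW F)
  let cu : R ⋙ E.functor ≅ (imVerdierW F).Q :=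
    Localization.compUniqFunctor R (imVerdierW F).Q (imVerdierW F)
  -- the right adjoint of Q
  let rq : (imVerdierW F).Localization ⥤ S :=
    E.inverse ⋙ ObjectProperty.ι (fun Y : S => IsZero (G.obj Y))
  let adjQ : (imVerdierW F).Q ⊣ rq :=
    Adjunction.ofNatIsoLeft ((RecollementAux.adjR F G adj₂).comp E.toAdjunction) cu
  -- the left adjoint of Q
  let E' := RecollementAux.EGH H F G adj₁ adj₂
  let ρ : L ⋙ (ObjectProperty.ι (fun Y : S => IsZero (H.obj Y)) ⋙ R) ≅ R :=
    NatIso.ofComponents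
      (fun Y => @asIso _ _ _ _ _ (Localization.inverts R (imVerdierW F) _
        (RecollementAux.counitL_mem H F adj₁ Y)))
      (fun {Y Y'} f => by
        dsimp
        rw [← Functor.map_comp, ← Functor.map_comp]
        congr 1
        exact (RecollementAux.adjL H F adj₁).counit.naturality f)
  let adjJ : (E'.functor ⋙ ObjectProperty.ι (fun Y : S => IsZero (H.obj Y))) ⊣ R :=
    Adjunction.ofNatIsoRight (E'.toAdjunction.comp (RecollementAux.adjL H F adj₁)) ρ
  let lq : (imVerdierW F).Localization ⥤ S :=
    E.inverse ⋙ (E'.functor ⋙ ObjectProperty.ι (fun Y : S => IsZero (H.obj Y)))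
  let adjQl : lq ⊣ (imVerdierW F).Q :=
    Adjunction.ofNatIsoRight (E.symm.toAdjunction.comp adjJ) cu
  refine ⟨part1, part2, ⟨lq, rq, ⟨adjQl⟩, ⟨adjQ⟩, ?_, ?_, ?_, ?_⟩, ?_, ?_⟩
  · infer_instance
  · infer_instance
  · infer_instance
  · infer_instance
  · -- Ker H ≃ S/Im F
    have i5 : ObjectProperty.ι (fun Y : S => IsZero (H.obj Y)) ⋙ (imVerdierW F).Q ≅
        (ObjectProperty.ι (fun Y : S => IsZero (H.obj Y)) ⋙ R) ⋙ E.functor :=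
      Functor.isoWhiskerLeft _ cu.symm ≪≫ (Functor.associator _ R E.functor).symm
    haveI : (ObjectProperty.ι (fun Y : S => IsZero (H.obj Y)) ⋙ R).IsEquivalence :=
      E'.isEquivalence_inverse
    haveI : ((ObjectProperty.ι (fun Y : S => IsZero (H.obj Y)) ⋙ R) ⋙
        E.functor).IsEquivalence := by
      exact ((ObjectProperty.ι (fun Y : S => IsZero (H.obj Y)) ⋙
        R).asEquivalence.trans E).isEquivalence_functor
    exact Functor.isEquivalence_of_iso i5.symm
  · -- Ker G ≃ S/Im F
    haveI : IsIso ((RecollementAux.adjR F G adj₂).counit) := inferInstance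
    have i4 : ObjectProperty.ι (fun Y : S => IsZero (G.obj Y)) ⋙ (imVerdierW F).Q ≅
        E.functor :=
      Functor.isoWhiskerLeft _ cu.symm ≪≫ (Functor.associator _ R E.functor).symm ≪≫
        Functor.isoWhiskerRight (asIso (RecollementAux.adjR F G adj₂).counit) E.functor ≪≫
        Functor.leftUnitor _
    exact Functor.isEquivalence_of_iso i4.symm
end

section
/- Let (A, B, C) be a recollement of abelian categories admitting a ladder of l-height three, i.e. functors l² ⊣ l¹ ⊣ l⁰ = l with l fully faithful. Then there is a recollement of abelian categories (Ker l¹, B, C) in which the quotient functor is l¹ : B ⥤ C with adjoint triple (l², l¹, l⁰). -/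
open CategoryTheory CategoryTheory.Limits

universe v₁ v₂ v₃ u₁ u₂ u₃

/-- A recollement of abelian categories with prescribed middle and right terms `B`, `C`,
and unspecified abelian left term. -/
structure AbRecollementOver (B : Type u₂) (C : Type u₃)
    [Category.{v₂} B] [Category.{v₃} C] [Abelian B] [Abelian C] where
  A : Type u₁
  [catA : Category.{v₁} A]
  [abA : Abelian A]
  R : AbRecollement A B C

attribute [instance] AbRecollementOver.catA AbRecollementOver.abA

/-! Having adjoints on both sides, `l¹` is exact, so `Ker l¹` is a Serre subcategory of `B` and
hence abelian. Applying `l¹` to the counit `l² l¹ X ⟶ X` (resp. the unit `X ⟶ l⁰ l¹ X`) gives a split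
epimorphism (resp. monomorphism) by a triangle identity, so its cokernel (resp. kernel) lies in
`Ker l¹`; these are the left and right adjoints of the inclusion. Finally `l²` is fully faithful
because `l⁰` is. -/

namespace CategoryTheory

instance ObjectProperty.isClosedUnderLimitsOfShape_isZero {C : Type*} [Category* C]
    [HasZeroMorphisms C] (J : Type*) [Category* J] :
    ObjectProperty.IsClosedUnderLimitsOfShape (IsZero (C := C)) J where
  limitsOfShape_le := by
    rintro X ⟨p⟩
    rw [IsZero.iff_id_eq_zero]
    exact p.isLimit.hom_ext fun j => (p.prop_diag_obj j).eq_of_tgt _ _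

lemma ObjectProperty.essImage_ι {C : Type*} [Category* C] (P : ObjectProperty C)
    [P.IsClosedUnderIsomorphisms] : P.ι.essImage = P := by
  ext X
  exact ⟨fun ⟨Y, ⟨e⟩⟩ => P.prop_of_iso e Y.property, fun h => ⟨⟨X, h⟩, ⟨Iso.refl _⟩⟩⟩

namespace Functor

variable {B C : Type*} [Category* B] [Category* C]

instance [Abelian B] [Abelian C] (G : B ⥤ C) [PreservesFiniteLimits G] :
    G.kernel.IsClosedUnderFiniteProducts :=
  .mk'

section Adjoints

variable [HasZeroMorphisms B] [HasZeroMorphisms C] {G : B ⥤ C} [G.PreservesZeroMorphisms]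

lemma isZero_obj_cokernel_counit {L : C ⥤ B} (adj : L ⊣ G) (X : B)
    [HasCokernel (adj.counit.app X)] [PreservesColimit (parallelPair (adj.counit.app X) 0) G] :
    IsZero (G.obj (cokernel (adj.counit.app X))) :=
  have : IsSplitEpi (G.map (adj.counit.app X)) := ⟨⟨⟨_, adj.right_triangle_components X⟩⟩⟩
  CokernelCofork.IsColimit.isZero_of_epi (CokernelCofork.mapIsColimit _ (cokernelIsCokernel _) G)

lemma isZero_obj_kernel_unit {R : C ⥤ B} (adj : G ⊣ R) (X : B)
    [HasKernel (adj.unit.app X)] [PreservesLimit (parallelPair (adj.unit.app X) 0) G] :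
    IsZero (G.obj (Limits.kernel (adj.unit.app X))) :=
  have : IsSplitMono (G.map (adj.unit.app X)) := ⟨⟨⟨_, adj.left_triangle_components X⟩⟩⟩
  KernelFork.IsLimit.isZero_of_mono (KernelFork.mapIsLimit _ (kernelIsKernel _) G)

lemma isRightAdjoint_kernel_ι [HasCokernels B] [PreservesColimitsOfShape WalkingParallelPair G]
    {L : C ⥤ B} (adj : L ⊣ G) : G.kernel.ι.IsRightAdjoint := by
  refine isRightAdjoint_of_leftAdjointObjIsDefined_eq_top (funext fun X => eq_true ?_)
  refine ⟨⟨.mk _ (isZero_obj_cokernel_counit adj X), ⟨?_⟩⟩⟩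
  exact
    { homEquiv {Y} :=
        { toFun := fun h => cokernel.π _ ≫ h.hom
          invFun := fun g => ObjectProperty.homMk <| cokernel.desc _ g <|
            (adj.homEquiv _ _).injective (Y.property.eq_of_tgt _ _)
          left_inv := fun h => by ext; exact cokernel.π_desc _ _ _
          right_inv := fun g => cokernel.π_desc _ _ _ }
      homEquiv_comp := fun _ _ => (Category.assoc _ _ _).symm }

lemma isLeftAdjoint_kernel_ι [HasKernels B] [PreservesLimitsOfShape WalkingParallelPair G]
    {R : C ⥤ B} (adj : G ⊣ R) : G.kernel.ι.IsLeftAdjoint := by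
  refine isLeftAdjoint_of_rightAdjointObjIsDefined_eq_top (funext fun Y => eq_true ?_)
  refine ⟨⟨.mk _ (isZero_obj_kernel_unit adj Y), ⟨?_⟩⟩⟩
  exact
    { homEquiv {X} :=
        { toFun := fun h => h.hom ≫ Limits.kernel.ι _
          invFun := fun g => ObjectProperty.homMk <| Limits.kernel.lift _ g <|
            (adj.homEquiv _ _).symm.injective (X.property.eq_of_src _ _)
          left_inv := fun h => by ext; exact Limits.kernel.lift_ι _ _ _
          right_inv := fun g => Limits.kernel.lift_ι _ _ _ }
      homEquiv_comp := fun _ _ => Category.assoc _ _ _ }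

end Adjoints

end Functor
end CategoryTheory

open CategoryTheory.Functor in
noncomputable def AbRecollement.ofAdjointTriple {B : Type u₂} {C : Type u₃}
    [Category.{v₂} B] [Category.{v₃} C] [Abelian B] [Abelian C]
    {L : C ⥤ B} {G : B ⥤ C} {R : C ⥤ B} [PreservesFiniteLimits G] [PreservesFiniteColimits G]
    (adj₁ : L ⊣ G) (adj₂ : G ⊣ R) [R.Full] [R.Faithful] :
    AbRecollement G.kernel.FullSubcategory B C :=
  have := isRightAdjoint_kernel_ι adj₁
  have := isLeftAdjoint_kernel_ι adj₂
  let hL : L.FullyFaithful :=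
    (Adjunction.Triple.fullyFaithfulEquiv ⟨adj₁, adj₂⟩).symm (.ofFullyFaithful R)
  { i := G.kernel.ι
    e := G
    q := G.kernel.ι.leftAdjoint
    p := G.kernel.ι.rightAdjoint
    l := L
    r := R
    adj_qi := .ofIsRightAdjoint _
    adj_ip := .ofIsLeftAdjoint _
    adj_le := adj₁
    adj_er := adj₂
    i_full := inferInstance
    i_faithful := inferInstance
    l_full := hL.full
    l_faithful := hL.faithful
    r_full := inferInstance
    r_faithful := inferInstance
    essImage_i_eq_ker_e X := by rw [ObjectProperty.essImage_ι]; rfl }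

/-- Let `(A, B, C)` be a recollement of abelian categories admitting a
ladder of `l`-height three, i.e. functors `l² ⊣ l¹ ⊣ l⁰ = l`.  Then there is a
recollement of abelian categories `(Ker l¹, B, C)` in which the quotient functor is
`l¹ : B ⥤ C` with adjoint triple `(l², l¹, l⁰)`. -/
theorem recollement_of_ladder_l_height_three
    {A : Type u₁} {B : Type u₂} {C : Type u₃}
    [Category.{v₁} A] [Category.{v₂} B] [Category.{v₃} C]
    [Abelian A] [Abelian B] [Abelian C]
    (R : AbRecollement A B C)
    (l₁ : B ⥤ C) (l₂ : C ⥤ B)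
    (adj₂₁ : l₂ ⊣ l₁) (adj₁₀ : l₁ ⊣ R.l) :
    ∃ S : AbRecollementOver.{v₂, v₂, v₃, u₂, u₂, u₃} B C,
      S.R.e = l₁ ∧ S.R.l = l₂ ∧ S.R.r = R.l ∧
      (∀ X : B, S.R.i.essImage X ↔ Limits.IsZero (l₁.obj X)) := by
  have := R.l_full
  have := R.l_faithful
  have := adj₂₁.isRightAdjoint
  have := adj₁₀.isLeftAdjoint
  let S := AbRecollement.ofAdjointTriple adj₂₁ adj₁₀
  exact ⟨⟨_, S⟩, rfl, rfl, rfl, S.essImage_i_eq_ker_e⟩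
end

section
/- Let (A, B, C) be a recollement of abelian categories admitting a ladder of l-height three (functors l² ⊣ l¹ ⊣ l⁰ with l⁰ fully faithful). Then l¹ : B ⥤ C preserves Gorenstein projective objects. -/
open CategoryTheory CategoryTheory.Limits

universe v₁ v₂ v₃ u₁ u₂ u₃

universe v u

/-- An object `X` of an abelian category is **Gorenstein projective** if it is the
cokernel of a differential in a totally acyclic complex of projectives, i.e. an acyclic
complex `P•` of projectives such that `Hom(P•, Q)` is acyclic for every projective `Q`. -/
def IsGorensteinProjective {A : Type u} [Category.{v} A] [Abelian A] (X : A) : Prop :=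
  ∃ P : CochainComplex A ℤ,
    (∀ n, Projective (P.X n)) ∧
    (∀ n, P.ExactAt n) ∧
    (∀ (Q : A), Projective Q → ∀ n,
      (((preadditiveYoneda.obj Q).mapHomologicalComplex _).obj P.op).ExactAt n) ∧
    Nonempty (X ≅ Limits.cokernel (P.d (-1) 0))

/-- An object `X` of an abelian category is **Gorenstein injective** if it is the kernel
of a differential in a totally acyclic complex of injectives, i.e. an acyclic complex
`I•` of injectives such that `Hom(E, I•)` is acyclic for every injective `E`. -/
def IsGorensteinInjective {A : Type u} [Category.{v} A] [Abelian A] (X : A) : Prop :=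
  ∃ I : CochainComplex A ℤ,
    (∀ n, Injective (I.X n)) ∧
    (∀ n, I.ExactAt n) ∧
    (∀ (E : A), Injective E → ∀ n,
      (((preadditiveCoyoneda.obj (Opposite.op E)).mapHomologicalComplex _).obj I).ExactAt n) ∧
    Nonempty (X ≅ Limits.kernel (I.d 0 1))

/-! `l¹` is exact, being both a left and a right adjoint, and `l¹ ⊣ l` identifies the complex
`Hom(l¹ P•, Q)` with `Hom(P•, l Q)`. As `l ⊣ e` with `e` itself a left adjoint, `l` preserves
epimorphisms and projectives; hence `l¹` sends a totally acyclic complex of projectives to another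
one, and it commutes with the cokernel presenting `X`. -/

section

variable {B : Type u₂} {C : Type u₃} [Category.{v₂} B] [Category.{v₃} C] [Abelian B] [Abelian C]
  {F : B ⥤ C} {G : C ⥤ B}

lemma CategoryTheory.Adjunction.exactAt_homComplex_map_iff (adj : F ⊣ G) [F.Additive]
    {ι : Type*} {c : ComplexShape ι} (K : HomologicalComplex B c) (Q : C) (n : ι) :
    (((preadditiveYoneda.obj Q).mapHomologicalComplex _).obj
        ((F.mapHomologicalComplex c).obj K).op).ExactAt n ↔
      (((preadditiveYoneda.obj (G.obj Q)).mapHomologicalComplex _).obj K.op).ExactAt n := by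
  simp only [HomologicalComplex.exactAt_iff, ShortComplex.ab_exact_iff_function_exact]
  refine (Function.Exact.iff_of_ladder_addEquiv (adj.homAddEquiv _ _) (adj.homAddEquiv _ _)
    (adj.homAddEquiv _ _) ?_ ?_).symm
  all_goals ext x; exact (adj.homEquiv_naturality_left _ _).symm

theorem IsGorensteinProjective.map_of_adjunction (adj : F ⊣ G) [PreservesFiniteLimits F]
    [G.PreservesEpimorphisms] [G.PreservesProjectiveObjects] {X : B}
    (hX : IsGorensteinProjective X) : IsGorensteinProjective (F.obj X) := by
  obtain ⟨P, hP, hexact, htotal, ⟨e⟩⟩ := hX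
  have := adj.isLeftAdjoint
  have := Functor.additive_of_preserves_binary_products F
  refine ⟨(F.mapHomologicalComplex _).obj P, fun n ↦ adj.map_projective _ (hP n),
    fun n ↦ (hexact n).map F, fun Q hQ n ↦ ?_, ⟨F.mapIso e ≪≫ PreservesCokernel.iso F _⟩⟩
  exact (adj.exactAt_homComplex_map_iff P Q n).2 (htotal _ (G.projective_obj_of_projective hQ) n)

end

theorem ladder_l_height_three_l1_preserves_gorensteinProjective_general
    {A : Type u₁} {B : Type u₂} {C : Type u₃}
    [Category.{v₁} A] [Category.{v₂} B] [Category.{v₃} C]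
    [Abelian A] [Abelian B] [Abelian C]
    (R : AbRecollement A B C)
    (l₁ : B ⥤ C) (l₂ : C ⥤ B)
    (adj₂₁ : l₂ ⊣ l₁) (adj₁₀ : l₁ ⊣ R.l) :
    ∀ X : B, IsGorensteinProjective X → IsGorensteinProjective (l₁.obj X) := by
  have := adj₂₁.rightAdjoint_preservesLimits
  have := R.adj_le.isLeftAdjoint
  have := R.adj_er.isLeftAdjoint
  have := Functor.preservesProjectiveObjects_of_adjunction_of_preservesEpimorphisms R.adj_le
  exact fun X ↦ IsGorensteinProjective.map_of_adjunction adj₁₀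

/-- Let `(A, B, C)` be a recollement of abelian categories admitting a
ladder of `l`-height three (functors `l² ⊣ l¹ ⊣ l⁰` with `l⁰ = l` fully faithful).
Then `l¹ : B ⥤ C` preserves Gorenstein projective objects. -/
theorem ladder_l_height_three_l1_preserves_gorensteinProjective
    {A : Type u₁} {B : Type u₂} {C : Type u₃}
    [Category.{v₁} A] [Category.{v₂} B] [Category.{v₃} C]
    [Abelian A] [Abelian B] [Abelian C]
    [EnoughProjectives B] [EnoughProjectives C]
    (R : AbRecollement A B C)
    (l₁ : B ⥤ C) (l₂ : C ⥤ B)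
    (adj₂₁ : l₂ ⊣ l₁) (adj₁₀ : l₁ ⊣ R.l) :
    ∀ X : B, IsGorensteinProjective X → IsGorensteinProjective (l₁.obj X) :=
  ladder_l_height_three_l1_preserves_gorensteinProjective_general R l₁ l₂ adj₂₁ adj₁₀
end

section
/- Let (A, B, C) be a recollement of abelian categories admitting a ladder of l-height three. Then e : B ⥤ C preserves Gorenstein injective objects. -/
open CategoryTheory CategoryTheory.Limits

universe v₁ v₂ v₃ u₁ u₂ u₃

universe v u

/-!
The functor `e` is exact (it has both adjoints `l` and `r`), and it preserves injectives since its
left adjoint `l` preserves monomorphisms (being right adjoint to `l₁`). Moreover `l` preserves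
injectives, because its left adjoint `l₁` is right adjoint to `l₂`. Hence for a totally acyclic
complex of injectives `I•` with `X = ker (I⁰ → I¹)`, the complex `e I•` is acyclic, consists of
injectives, has kernel `e X`, and `Hom(E, e I•) ≅ Hom(l E, I•)` is acyclic for every injective `E`.
-/

namespace CategoryTheory.Adjunction

variable {C : Type u₁} {D : Type u₂} [Category.{v₁} C] [Category.{v₂} D]
  [Preadditive C] [Preadditive D] {L : C ⥤ D} {F : D ⥤ C} (adj : L ⊣ F) [F.Additive]
  {ι : Type*} {c : ComplexShape ι}

include adj in
theorem exactAt_preadditiveCoyoneda_mapHomologicalComplex_iff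
    (K : HomologicalComplex D c) (E : C) (n : ι) :
    (((preadditiveCoyoneda.obj (Opposite.op E)).mapHomologicalComplex c).obj
        ((F.mapHomologicalComplex c).obj K)).ExactAt n ↔
      (((preadditiveCoyoneda.obj (Opposite.op (L.obj E))).mapHomologicalComplex c).obj
        K).ExactAt n := by
  have := adj.left_adjoint_additive
  simp only [HomologicalComplex.exactAt_iff, ShortComplex.ab_exact_iff_function_exact]
  refine (Function.Exact.iff_of_ladder_addEquiv (adj.homAddEquiv _ _).symm
    (adj.homAddEquiv _ _).symm (adj.homAddEquiv _ _).symm ?_ ?_).symm <;>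
  · ext f
    exact (adj.homEquiv_naturality_right_symm f _).symm

end CategoryTheory.Adjunction

theorem IsGorensteinInjective.map_of_adjunction {B : Type u₂} {C : Type u₃}
    [Category.{v₂} B] [Category.{v₃} C] [Abelian B] [Abelian C]
    {L : C ⥤ B} {F : B ⥤ C} (adj : L ⊣ F) [L.PreservesMonomorphisms]
    [L.PreservesInjectiveObjects] [PreservesFiniteColimits F]
    {X : B} (hX : IsGorensteinInjective X) : IsGorensteinInjective (F.obj X) := by
  have : PreservesLimits F := adj.rightAdjoint_preservesLimits
  have : F.Additive := F.additive_of_preserves_binary_products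
  obtain ⟨I, hinj, hex, htot, ⟨φ⟩⟩ := hX
  refine ⟨(F.mapHomologicalComplex _).obj I, fun _ => Injective.injective_of_adjoint adj _,
    fun n => (hex n).map F, fun E hE n => ?_, ⟨F.mapIso φ ≪≫ PreservesKernel.iso F (I.d 0 1)⟩⟩
  exact (adj.exactAt_preadditiveCoyoneda_mapHomologicalComplex_iff I E n).2
    (htot _ (L.injective_obj_of_injective hE) n)

theorem ladder_l_height_three_e_preserves_gorensteinInjective_general
    {A : Type u₁} {B : Type u₂} {C : Type u₃}
    [Category.{v₁} A] [Category.{v₂} B] [Category.{v₃} C]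
    [Abelian A] [Abelian B] [Abelian C]
    (R : AbRecollement A B C)
    (l₁ : B ⥤ C) (l₂ : C ⥤ B)
    (adj₂₁ : l₂ ⊣ l₁) (adj₁₀ : l₁ ⊣ R.l) :
    ∀ X : B, IsGorensteinInjective X → IsGorensteinInjective (R.e.obj X) := by
  have : l₁.IsRightAdjoint := adj₂₁.isRightAdjoint
  have : R.l.IsRightAdjoint := adj₁₀.isRightAdjoint
  have : R.e.IsLeftAdjoint := R.adj_er.isLeftAdjoint
  have : R.l.PreservesInjectiveObjects :=
    Functor.preservesInjectiveObjects_of_adjunction_of_preservesMonomorphisms adj₁₀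
  exact fun X hX => hX.map_of_adjunction R.adj_le

/-- Let `(A, B, C)` be a recollement of abelian categories admitting a
ladder of `l`-height three.  Then `e : B ⥤ C` preserves Gorenstein injective objects. -/
theorem ladder_l_height_three_e_preserves_gorensteinInjective
    {A : Type u₁} {B : Type u₂} {C : Type u₃}
    [Category.{v₁} A] [Category.{v₂} B] [Category.{v₃} C]
    [Abelian A] [Abelian B] [Abelian C]
    [EnoughInjectives B] [EnoughInjectives C]
    (R : AbRecollement A B C)
    (l₁ : B ⥤ C) (l₂ : C ⥤ B)
    (adj₂₁ : l₂ ⊣ l₁) (adj₁₀ : l₁ ⊣ R.l) :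
    ∀ X : B, IsGorensteinInjective X → IsGorensteinInjective (R.e.obj X) :=
  ladder_l_height_three_e_preserves_gorensteinInjective_general R l₁ l₂ adj₂₁ adj₁₀
end

section
/- Let (A, B, C) be a recollement of abelian categories with a ladder of l-height three, and suppose B is n-Gorenstein. Then C is n-Gorenstein. -/
open CategoryTheory CategoryTheory.Limits

universe v₁ v₂ v₃ u₁ u₂ u₃

universe w v u

/-- `X` has projective dimension `≤ n`: `Extⁱ(X, -) = 0` for all `i > n`. -/
def projDimLE {A : Type u} [Category.{v} A] [Abelian A] [CategoryTheory.HasExt.{w} A]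
    (X : A) (n : ℕ) : Prop :=
  ∀ (Y : A) (i : ℕ), n < i → Subsingleton (CategoryTheory.Abelian.Ext X Y i)

/-- `X` has injective dimension `≤ n`: `Extⁱ(-, X) = 0` for all `i > n`. -/
def injDimLE {A : Type u} [Category.{v} A] [Abelian A] [CategoryTheory.HasExt.{w} A]
    (X : A) (n : ℕ) : Prop :=
  ∀ (Y : A) (i : ℕ), n < i → Subsingleton (CategoryTheory.Abelian.Ext Y X i)

/-- An abelian category (with enough projectives and injectives) is `n`-Gorenstein if
`spli A ≤ n` (every injective has projective dimension `≤ n`) and `silp A ≤ n`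
(every projective has injective dimension `≤ n`). -/
def IsNGorenstein (A : Type u) [Category.{v} A] [Abelian A] [CategoryTheory.HasExt.{w} A]
    (n : ℕ) : Prop :=
  (∀ I : A, CategoryTheory.Injective I → projDimLE.{w} I n) ∧
  (∀ P : A, CategoryTheory.Projective P → injDimLE.{w} P n)

/-!
In the ladder `l² ⊣ l¹ ⊣ l ⊣ e ⊣ r`, the functor `l : C ⥤ B` is fully faithful, and exact since
it has adjoints on both sides. It preserves projectives because its right adjoint `e`, being a
left adjoint, preserves epimorphisms, and injectives because its left adjoint `l¹`, being a right
adjoint, preserves monomorphisms. A fully faithful exact functor preserving projectives induces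
isomorphisms on all `Ext` groups (dimension shifting along projective presentations), so the
vanishing of `Extⁱ` for `i > n` in `B` descends along `l` to `C`.
-/

section

open Abelian

variable {C : Type u₁} {D : Type u₂} [Category.{v₁} C] [Category.{v₂} D]
  [Abelian C] [Abelian D] [HasExt.{w} C] [HasExt.{w} D] [EnoughProjectives C]
  (F : C ⥤ D) [F.Full] [F.Faithful] [F.Additive] [PreservesFiniteLimits F]
  [PreservesFiniteColimits F] [F.PreservesProjectiveObjects]

namespace CategoryTheory.Functor

lemma subsingleton_ext_of_map {X Y : C} {i : ℕ}
    (h : Subsingleton (Ext.{w} (F.obj X) (F.obj Y) i)) : Subsingleton (Ext.{w} X Y i) :=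
  (F.mapExt_bijective_of_preservesProjectiveObjects X Y i).injective.subsingleton

lemma projDimLE_of_map {X : C} {n : ℕ} (h : projDimLE.{w} (F.obj X) n) : projDimLE.{w} X n :=
  fun Y i hi => F.subsingleton_ext_of_map (h (F.obj Y) i hi)

lemma injDimLE_of_map {X : C} {n : ℕ} (h : injDimLE.{w} (F.obj X) n) : injDimLE.{w} X n :=
  fun Y i hi => F.subsingleton_ext_of_map (h (F.obj Y) i hi)

end CategoryTheory.Functor

lemma IsNGorenstein.of_fullyFaithful_exact [F.PreservesInjectiveObjects] {n : ℕ}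
    (hD : IsNGorenstein.{w} D n) : IsNGorenstein.{w} C n :=
  ⟨fun I hI => F.projDimLE_of_map (hD.1 (F.obj I) (F.injective_obj_of_injective hI)),
    fun P hP => F.injDimLE_of_map (hD.2 (F.obj P) (F.projective_obj_of_projective hP))⟩

end

theorem nGorenstein_of_ladder_l_height_three_general
    {A : Type u₁} {B : Type u₂} {C : Type u₃}
    [Category.{v₁} A] [Category.{v₂} B] [Category.{v₃} C]
    [Abelian A] [Abelian B] [Abelian C]
    [EnoughProjectives C]
    [CategoryTheory.HasExt.{w} B] [CategoryTheory.HasExt.{w} C]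
    (R : AbRecollement A B C)
    (l₁ : B ⥤ C) (l₂ : C ⥤ B)
    (adj₂₁ : l₂ ⊣ l₁) (adj₁₀ : l₁ ⊣ R.l)
    (n : ℕ) (hB : IsNGorenstein.{w} B n) :
    IsNGorenstein.{w} C n := by
  have := R.l_full
  have := R.l_faithful
  have : PreservesFiniteLimits R.l := by
    have := adj₁₀.rightAdjoint_preservesLimits.{0, 0}
    infer_instance
  have : PreservesFiniteColimits R.l := by
    have := R.adj_le.leftAdjoint_preservesColimits.{0, 0}
    infer_instance
  have : R.l.Additive := R.l.additive_of_preserves_binary_products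
  have : R.e.PreservesEpimorphisms := Functor.preservesEpimorphisms_of_adjunction R.adj_er
  have : l₁.PreservesMonomorphisms := Functor.preservesMonomorphisms_of_adjunction adj₂₁
  have := Functor.preservesProjectiveObjects_of_adjunction_of_preservesEpimorphisms R.adj_le
  have := Functor.preservesInjectiveObjects_of_adjunction_of_preservesMonomorphisms adj₁₀
  exact hB.of_fullyFaithful_exact R.l

/-- Let `(A, B, C)` be a recollement of abelian categories with a
ladder of `l`-height three, and suppose `B` is `n`-Gorenstein.  Then `C` is
`n`-Gorenstein. -/
theorem nGorenstein_of_ladder_l_height_three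
    {A : Type u₁} {B : Type u₂} {C : Type u₃}
    [Category.{v₁} A] [Category.{v₂} B] [Category.{v₃} C]
    [Abelian A] [Abelian B] [Abelian C]
    [EnoughProjectives B] [EnoughInjectives B]
    [EnoughProjectives C] [EnoughInjectives C]
    [CategoryTheory.HasExt.{w} B] [CategoryTheory.HasExt.{w} C]
    (R : AbRecollement A B C)
    (l₁ : B ⥤ C) (l₂ : C ⥤ B)
    (adj₂₁ : l₂ ⊣ l₁) (adj₁₀ : l₁ ⊣ R.l)
    (n : ℕ) (hB : IsNGorenstein.{w} B n) :
    IsNGorenstein.{w} C n :=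
  nGorenstein_of_ladder_l_height_three_general R l₁ l₂ adj₂₁ adj₁₀ n hB
end

section
/- Let (A, B, C) be a recollement of abelian categories with a ladder of l-height four (functors l³ ⊣ l² ⊣ l¹ ⊣ l⁰). Then l = l⁰ : C ⥤ B preserves Gorenstein injective objects, and e ∘ l restricted to Gorenstein injective objects of C is naturally isomorphic to the identity. -/
open CategoryTheory CategoryTheory.Limits

universe v₁ v₂ v₃ u₁ u₂ u₃

universe v u

lemma exactAt_map_of_exact {C₁ : Type*} {C₂ : Type*} [Category C₁] [Category C₂]
    [Abelian C₁] [Abelian C₂] (F : C₁ ⥤ C₂) [PreservesFiniteLimits F] [PreservesFiniteColimits F]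
    [F.PreservesZeroMorphisms]
    {ι : Type*} {c : ComplexShape ι} (K : HomologicalComplex C₁ c) (n : ι) (h : K.ExactAt n) :
    ((F.mapHomologicalComplex c).obj K).ExactAt n := by
  rw [HomologicalComplex.exactAt_iff] at h ⊢
  exact h.map F

/-- Let `(A, B, C)` be a recollement of abelian categories with a
ladder of `l`-height four (functors `l³ ⊣ l² ⊣ l¹ ⊣ l⁰`).  Then `l = l⁰ : C ⥤ B`
preserves Gorenstein injective objects, and `e ∘ l` restricted to the Gorenstein
injective objects of `C` is naturally isomorphic to the identity (i.e. to the
inclusion of the full subcategory of Gorenstein injectives). -/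
theorem ladder_l_height_four_l_preserves_gorensteinInjective
    {A : Type u₁} {B : Type u₂} {C : Type u₃}
    [Category.{v₁} A] [Category.{v₂} B] [Category.{v₃} C]
    [Abelian A] [Abelian B] [Abelian C]
    [EnoughInjectives B] [EnoughInjectives C]
    (R : AbRecollement A B C)
    (l₁ : B ⥤ C) (l₂ : C ⥤ B) (l₃ : B ⥤ C)
    (adj₃₂ : l₃ ⊣ l₂) (adj₂₁ : l₂ ⊣ l₁) (adj₁₀ : l₁ ⊣ R.l) :
    (∀ X : C, IsGorensteinInjective X → IsGorensteinInjective (R.l.obj X)) ∧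
    Nonempty
      ((ObjectProperty.ι (fun X : C => IsGorensteinInjective X) ⋙ R.l ⋙ R.e) ≅
        ObjectProperty.ι (fun X : C => IsGorensteinInjective X)) := by
  haveI := adj₁₀.isRightAdjoint
  haveI := adj₂₁.isRightAdjoint
  haveI : PreservesLimitsOfSize.{0,0} R.l := adj₁₀.rightAdjoint_preservesLimits
  haveI : PreservesFiniteLimits R.l := PreservesLimitsOfSize.preservesFiniteLimits R.l
  haveI : PreservesColimitsOfSize.{0,0} R.l := R.adj_le.leftAdjoint_preservesColimits
  haveI : PreservesFiniteColimits R.l := PreservesColimitsOfSize.preservesFiniteColimits R.l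
  haveI : PreservesLimitsOfSize.{0,0} l₁ := adj₂₁.rightAdjoint_preservesLimits
  haveI : PreservesFiniteLimits l₁ := PreservesLimitsOfSize.preservesFiniteLimits l₁
  haveI : PreservesLimitsOfSize.{0,0} l₂ := adj₃₂.rightAdjoint_preservesLimits
  haveI : PreservesFiniteLimits l₂ := PreservesLimitsOfSize.preservesFiniteLimits l₂
  constructor
  · intro X hX
    obtain ⟨I, hInj, hEx, hTot, ⟨e⟩⟩ := hX
    refine ⟨(R.l.mapHomologicalComplex _).obj I, fun n => ?_, fun n => ?_, ?_, ⟨?_⟩⟩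
    · exact adj₁₀.map_injective _ (hInj n)
    · exact exactAt_map_of_exact R.l I n (hEx n)
    · intro E hE n
      have hE' : Injective (l₁.obj E) := adj₂₁.map_injective E hE
      have h := hTot (l₁.obj E) hE' n
      rw [HomologicalComplex.exactAt_iff' _ (n-1) n (n+1) (by simp) (by simp)] at h ⊢
      rw [ShortComplex.ab_exact_iff] at h ⊢
      intro (x₂ : E ⟶ R.l.obj (I.X n)) hx₂
      replace hx₂ : (x₂ ≫ R.l.map (I.d n (n+1)) : E ⟶ R.l.obj (I.X (n+1))) = 0 := hx₂
      have hψ : ((adj₁₀.homEquiv E (I.X n)).symm x₂ ≫ I.d n (n+1) : l₁.obj E ⟶ I.X (n+1)) = 0 := by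
        rw [← Adjunction.homEquiv_naturality_right_symm, hx₂]
        simp [Adjunction.homEquiv_counit]
      obtain ⟨(x₁ : l₁.obj E ⟶ I.X (n-1)), hx₁⟩ := h ((adj₁₀.homEquiv E (I.X n)).symm x₂) hψ
      refine ⟨(adj₁₀.homEquiv E (I.X (n-1))) x₁, ?_⟩
      show ((adj₁₀.homEquiv E (I.X (n-1))) x₁ ≫ R.l.map (I.d (n-1) n) : E ⟶ R.l.obj (I.X n)) = x₂
      rw [← Adjunction.homEquiv_naturality_right]
      have hx₁' : (x₁ ≫ I.d (n-1) n : l₁.obj E ⟶ I.X n) = (adj₁₀.homEquiv E (I.X n)).symm x₂ := hx₁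
      rw [hx₁', Equiv.apply_symm_apply]
    · exact R.l.mapIso e ≪≫ Limits.PreservesKernel.iso R.l (I.d 0 1)
  · haveI := R.l_full
    haveI := R.l_faithful
    haveI : IsIso R.adj_le.unit := inferInstance
    exact ⟨NatIso.ofComponents (fun X => (asIso (R.adj_le.unit.app X.obj)).symm)
      (fun {X Y} f => by
        dsimp
        rw [IsIso.comp_inv_eq, Category.assoc, IsIso.eq_inv_comp]
        simpa using (R.adj_le.unit.naturality f).symm)⟩
end

section
/- Let (A, B, C) be a recollement of abelian categories with a ladder of r-height four (functors r⁰ ⊣ r¹ ⊣ r² ⊣ r³). Then r = r⁰ : C ⥤ B preserves Gorenstein projective objects, and e ∘ r restricted to Gorenstein projective objects of C is naturally isomorphic to the identity. -/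
/-! The functor `r` is exact, being right adjoint to `e` and left adjoint to `r¹`, and it preserves
projectives because `r¹` preserves epimorphisms. So `r` sends a totally acyclic complex of
projectives `P•` to an acyclic complex of projectives, and `Hom(r P•, Q) ≃ Hom(P•, r¹ Q)` is
acyclic because `r¹ Q` is projective: `r¹` is left adjoint to `r²`, which preserves epimorphisms
as a left adjoint of `r³`. Since `r` is fully faithful, the counit `r ⋙ e ⟶ 𝟭 C` is an
isomorphism. -/

open CategoryTheory CategoryTheory.Limits

universe v₁ v₂ v₃ u₁ u₂ u₃

universe v u

section

variable {C : Type*} {D : Type*} [Category C] [Category D] [Abelian C] [Abelian D]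
  {ι : Type*} {c : ComplexShape ι}

theorem HomologicalComplex.ExactAt.map {K : HomologicalComplex C c} {i : ι} (h : K.ExactAt i)
    (F : C ⥤ D) [F.PreservesZeroMorphisms] [F.PreservesHomology] :
    ((F.mapHomologicalComplex c).obj K).ExactAt i :=
  ShortComplex.Exact.map h F

/-- The two hom sets may live in different universes, so the adjunction is used elementwise
rather than as an isomorphism of hom complexes. -/
theorem exactAt_homComplex_of_adjunction {F : C ⥤ D} {G : D ⥤ C} (adj : F ⊣ G) [F.Additive]
    (K : HomologicalComplex C c) (Q : D) (i : ι)
    (h : (((preadditiveYoneda.obj (G.obj Q)).mapHomologicalComplex _).obj K.op).ExactAt i) :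
    (((preadditiveYoneda.obj Q).mapHomologicalComplex _).obj
        ((F.mapHomologicalComplex c).obj K).op).ExactAt i := by
  rw [HomologicalComplex.exactAt_iff, ShortComplex.ab_exact_iff] at h ⊢
  intro (f : F.obj (K.X i) ⟶ Q) (hf : F.map (K.d (c.symm.next i) i) ≫ f = 0)
  have hf' : K.d (c.symm.next i) i ≫ adj.homEquiv _ _ f = 0 := by
    rw [← adj.homEquiv_naturality_left, hf, adj.homAddEquiv_zero]
  obtain ⟨(g : K.X (c.symm.prev i) ⟶ G.obj Q), (hg : K.d i _ ≫ g = adj.homEquiv _ _ f)⟩ :=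
    h _ hf'
  refine ⟨(adj.homEquiv _ _).symm g, show F.map (K.d _ _) ≫ _ = f from ?_⟩
  rw [← adj.homEquiv_naturality_left_symm, hg, Equiv.symm_apply_apply]

theorem IsGorensteinProjective.map {F : C ⥤ D} {G : D ⥤ C} (adj : F ⊣ G)
    [PreservesFiniteLimits F] [G.PreservesEpimorphisms]
    (hG : ∀ Q : D, Projective Q → Projective (G.obj Q)) {X : C}
    (hX : IsGorensteinProjective X) : IsGorensteinProjective (F.obj X) := by
  obtain ⟨P, hproj, hexact, htotal, ⟨e⟩⟩ := hX
  have : F.IsLeftAdjoint := adj.isLeftAdjoint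
  have : F.Additive := F.additive_of_preserves_binary_products
  exact ⟨(F.mapHomologicalComplex _).obj P, fun n => adj.map_projective _ (hproj n),
    fun n => (hexact n).map F,
    fun Q hQ n => exactAt_homComplex_of_adjunction adj P Q n (htotal _ (hG Q hQ) n),
    ⟨F.mapIso e ≪≫ PreservesCokernel.iso F _⟩⟩

end

theorem ladder_r_height_four_r_preserves_gorensteinProjective_general
    {A : Type u₁} {B : Type u₂} {C : Type u₃}
    [Category.{v₁} A] [Category.{v₂} B] [Category.{v₃} C]
    [Abelian A] [Abelian B] [Abelian C]
    (R : AbRecollement A B C)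
    (r₁ : B ⥤ C) (r₂ : C ⥤ B) (r₃ : B ⥤ C)
    (adj₀₁ : R.r ⊣ r₁) (adj₁₂ : r₁ ⊣ r₂) (adj₂₃ : r₂ ⊣ r₃) :
    (∀ X : C, IsGorensteinProjective X → IsGorensteinProjective (R.r.obj X)) ∧
    Nonempty
      ((ObjectProperty.ι (fun X : C => IsGorensteinProjective X) ⋙ R.r ⋙ R.e) ≅
        ObjectProperty.ι (fun X : C => IsGorensteinProjective X)) := by
  have := R.r_full
  have := R.r_faithful
  have : R.r.IsRightAdjoint := R.adj_er.isRightAdjoint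
  have : r₁.IsLeftAdjoint := adj₁₂.isLeftAdjoint
  have : r₂.IsLeftAdjoint := adj₂₃.isLeftAdjoint
  refine ⟨fun X hX => hX.map adj₀₁ fun Q hQ => adj₁₂.map_projective Q hQ, ?_⟩
  exact ⟨Functor.isoWhiskerLeft _ (asIso R.adj_er.counit) ≪≫ Functor.rightUnitor _⟩

/-- Let `(A, B, C)` be a recollement of abelian categories with a
ladder of `r`-height four (functors `r⁰ ⊣ r¹ ⊣ r² ⊣ r³`, where `r⁰ = r`).  Then
`r = r⁰ : C ⥤ B` preserves Gorenstein projective objects, and `e ∘ r` restricted to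
the Gorenstein projective objects of `C` is naturally isomorphic to the identity. -/
theorem ladder_r_height_four_r_preserves_gorensteinProjective
    {A : Type u₁} {B : Type u₂} {C : Type u₃}
    [Category.{v₁} A] [Category.{v₂} B] [Category.{v₃} C]
    [Abelian A] [Abelian B] [Abelian C]
    [EnoughProjectives B] [EnoughProjectives C]
    (R : AbRecollement A B C)
    (r₁ : B ⥤ C) (r₂ : C ⥤ B) (r₃ : B ⥤ C)
    (adj₀₁ : R.r ⊣ r₁) (adj₁₂ : r₁ ⊣ r₂) (adj₂₃ : r₂ ⊣ r₃) :
    (∀ X : C, IsGorensteinProjective X → IsGorensteinProjective (R.r.obj X)) ∧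
    Nonempty
      ((ObjectProperty.ι (fun X : C => IsGorensteinProjective X) ⋙ R.r ⋙ R.e) ≅
        ObjectProperty.ι (fun X : C => IsGorensteinProjective X)) :=
  ladder_r_height_four_r_preserves_gorensteinProjective_general R r₁ r₂ r₃ adj₀₁ adj₁₂ adj₂₃
end

section
/- Let T and S be triangulated categories, F : T ⥤ S and G : S ⥤ T triangulated functors with F ⊣ G, and let X ⊆ T, Y ⊆ S be triangulated subcategories with F(X) ⊆ Y and G(Y) ⊆ X. Then F induces a triangulated functor T/X ⥤ S/Y, G induces a right adjoint S/Y ⥤ T/X, and if G is fully faithful then the induced functor S/Y ⥤ T/X is fully faithful. -/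
open CategoryTheory CategoryTheory.Limits CategoryTheory.Pretriangulated
  CategoryTheory.Triangulated

universe v₁ v₂ u₁ u₂

namespace CategoryTheory.Triangulated

variable (C : Type*) [Category C] [HasZeroObject C] [HasShift C ℤ] [Preadditive C]
  [∀ n : ℤ, (shiftFunctor C n).Additive] [Pretriangulated C]

structure Subcategory where
  P : C → Prop
  zero' : ∃ (Z : C) (_ : IsZero Z), P Z
  shift (X : C) (n : ℤ) : P X → P (X⟦n⟧)
  ext₂' (T : Triangle C) (_ : T ∈ distTriang C) : P T.obj₁ → P T.obj₃ → ObjectProperty.isoClosure P T.obj₂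

def Subcategory.W {C : Type*} [Category C] [HasZeroObject C] [HasShift C ℤ] [Preadditive C]
    [∀ n : ℤ, (shiftFunctor C n).Additive] [Pretriangulated C] (S : Subcategory C) : MorphismProperty C := fun X Y f =>
  ∃ (Z : C) (g : Y ⟶ Z) (h : Z ⟶ X⟦(1 : ℤ)⟧) (_ : Triangle.mk f g h ∈ distTriang C), S.P Z

end CategoryTheory.Triangulated

section Aux

variable {T : Type u₁} {S : Type u₂} [Category.{v₁} T] [Category.{v₂} S]
    [HasZeroObject T] [HasZeroObject S] [Preadditive T] [Preadditive S]
    [HasShift T ℤ] [HasShift S ℤ]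
    [∀ n : ℤ, (CategoryTheory.shiftFunctor T n).Additive]
    [∀ n : ℤ, (CategoryTheory.shiftFunctor S n).Additive]
    [Pretriangulated T] [Pretriangulated S]

/-- A triangulated functor sends `Xs.W` into `Ys.W` as soon as it sends `Xs` into `Ys`. -/
lemma map_W_aux (F : T ⥤ S) [F.CommShift ℤ] [F.IsTriangulated]
    (Xs : Subcategory T) (Ys : Subcategory S)
    (hF : ∀ X₀ : T, Xs.P X₀ → Ys.P (F.obj X₀)) {A B : T} (f : A ⟶ B) (hf : Xs.W f) :
    Ys.W (F.map f) := by
  obtain ⟨Z, g, h, hT, hZ⟩ := hf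
  exact ⟨_, _, _, F.map_distinguished _ hT, hF Z hZ⟩

end Aux

/-- Let `T`, `S` be triangulated categories, `F : T ⥤ S` and
`G : S ⥤ T` triangulated functors with `F ⊣ G`, and let `X ⊆ T`, `Y ⊆ S` be
triangulated subcategories with `F(X) ⊆ Y` and `G(Y) ⊆ X`.  Then `F` induces a
functor `T/X ⥤ S/Y` on the Verdier quotients, `G` induces a right adjoint
`S/Y ⥤ T/X`, and if `G` is fully faithful then the induced functor `S/Y ⥤ T/X`
is fully faithful. -/
theorem induced_adjunction_on_verdier_quotients
    {T : Type u₁} {S : Type u₂} [Category.{v₁} T] [Category.{v₂} S]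
    [HasZeroObject T] [HasZeroObject S] [Preadditive T] [Preadditive S]
    [HasShift T ℤ] [HasShift S ℤ]
    [∀ n : ℤ, (CategoryTheory.shiftFunctor T n).Additive]
    [∀ n : ℤ, (CategoryTheory.shiftFunctor S n).Additive]
    [Pretriangulated T] [Pretriangulated S]
    (F : T ⥤ S) (G : S ⥤ T) [F.CommShift ℤ] [G.CommShift ℤ]
    [F.IsTriangulated] [G.IsTriangulated] (adj : F ⊣ G)
    (Xs : Subcategory T) (Ys : Subcategory S)
    (hF : ∀ X₀ : T, Xs.P X₀ → Ys.P (F.obj X₀))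
    (hG : ∀ Y₀ : S, Ys.P Y₀ → Xs.P (G.obj Y₀)) :
    ∃ (F' : Xs.W.Localization ⥤ Ys.W.Localization)
      (G' : Ys.W.Localization ⥤ Xs.W.Localization),
      Nonempty (Xs.W.Q ⋙ F' ≅ F ⋙ Ys.W.Q) ∧
      Nonempty (Ys.W.Q ⋙ G' ≅ G ⋙ Xs.W.Q) ∧
      Nonempty (F' ⊣ G') ∧
      (G.Full → G.Faithful → (G'.Full ∧ G'.Faithful)) := by
  -- `F` inverts `Xs.W` after composing with the localization functor, etc.
  have hFW : Xs.W.IsInvertedBy (F ⋙ Ys.W.Q) := fun A B f hf =>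
    Localization.inverts Ys.W.Q Ys.W _ (map_W_aux F Xs Ys hF f hf)
  have hGW : Ys.W.IsInvertedBy (G ⋙ Xs.W.Q) := fun A B f hf =>
    Localization.inverts Xs.W.Q Xs.W _ (map_W_aux G Ys Xs hG f hf)
  let F' : Xs.W.Localization ⥤ Ys.W.Localization :=
    Localization.lift (F ⋙ Ys.W.Q) hFW Xs.W.Q
  let G' : Ys.W.Localization ⥤ Xs.W.Localization :=
    Localization.lift (G ⋙ Xs.W.Q) hGW Ys.W.Q
  have eF : Xs.W.Q ⋙ F' ≅ F ⋙ Ys.W.Q := Localization.fac _ hFW _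
  have eG : Ys.W.Q ⋙ G' ≅ G ⋙ Xs.W.Q := Localization.fac _ hGW _
  letI : CatCommSq F Xs.W.Q Ys.W.Q F' := ⟨eF.symm⟩
  letI : CatCommSq G Ys.W.Q Xs.W.Q G' := ⟨eG.symm⟩
  let adj' : F' ⊣ G' := adj.localization Xs.W.Q Xs.W Ys.W.Q Ys.W F' G'
  refine ⟨F', G', ⟨eF⟩, ⟨eG⟩, ⟨adj'⟩, fun hfull hfaith => ?_⟩
  -- If `G` is fully faithful, the counit of `adj` is an isomorphism, hence so is
  -- the counit of `adj'`, hence `G'` is fully faithful.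
  letI := hfull
  letI := hfaith
  have hcounit : ∀ (Z : Ys.W.Localization), IsIso (adj'.counit.app Z) := by
    intro Z
    obtain ⟨X₂, ⟨e⟩⟩ : ∃ X₂, Nonempty (Ys.W.Q.obj X₂ ≅ Z) := by
      have : (Ys.W.Q).EssSurj := Localization.essSurj Ys.W.Q Ys.W
      exact ⟨_, ⟨Ys.W.Q.objObjPreimageIso Z⟩⟩
    have h1 : IsIso (adj'.counit.app (Ys.W.Q.obj X₂)) := by
      rw [Adjunction.localization_counit_app]
      infer_instance
    have h2 : (G' ⋙ F').map e.hom ≫ adj'.counit.app Z =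
        adj'.counit.app (Ys.W.Q.obj X₂) ≫ e.hom := by
      exact adj'.counit.naturality e.hom
    have : adj'.counit.app Z =
        (G' ⋙ F').map e.inv ≫ (adj'.counit.app (Ys.W.Q.obj X₂) ≫ e.hom) := by
      rw [← h2, ← Functor.map_comp_assoc, e.inv_hom_id, CategoryTheory.Functor.map_id,
        Category.id_comp]
    rw [this]
    infer_instance
  haveI : IsIso adj'.counit := NatIso.isIso_of_isIso_app _
  have ff := adj'.fullyFaithfulROfIsIsoCounit
  exact ⟨ff.full, ff.faithful⟩
end

section
/- Let (A, B, C) be a recollement of abelian categories with a ladder of l-height two and r-height three, and assume l, r, r¹ are appropriately exact as follows from the ladder. Then the adjunction l ⊣ e induces an adjoint pair between the stable categories of Gorenstein projective objects, l : GProj(C)/proj → GProj(B)/proj and e : GProj(B)/proj → GProj(C)/proj, with the induced l fully faithful; i.e. Hom-groups modulo maps factoring through projectives satisfy Hom̲_B(l(X), Y) ≅ Hom̲_C(X, e(Y)) for X ∈ GProj(C), Y ∈ GProj(B). -/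
open CategoryTheory CategoryTheory.Limits ZeroObject

universe v₁ v₂ v₃ u₁ u₂ u₃

universe v u

/-- A morphism factors through a projective object.  Morphisms in the stable category
`GProj/proj` are morphisms modulo those factoring through a projective. -/
def FactorsThroughProjective {A : Type u} [Category.{v} A]
    {X Y : A} (f : X ⟶ Y) : Prop :=
  ∃ (P : A) (_ : Projective P) (g : X ⟶ P) (h : P ⟶ Y), f = g ≫ h

section AuxGP

universe w₁ w₂ uB uC vB vC

/-- Transfer exactness of complexes of abelian groups along a degreewise additive
equivalence commuting with the differentials. -/
lemma exactAt_transfer {ι : Type} {c' : ComplexShape ι}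
    (T₁ : HomologicalComplex AddCommGrpCat.{w₁} c') (T₂ : HomologicalComplex AddCommGrpCat.{w₂} c')
    (φ : ∀ n, T₁.X n ≃+ T₂.X n)
    (hφ : ∀ i j (x : T₁.X i), φ j (T₁.d i j x) = T₂.d i j (φ i x))
    (n : ι) (h : T₂.ExactAt n) : T₁.ExactAt n := by
  rw [HomologicalComplex.exactAt_iff, ShortComplex.ab_exact_iff] at h ⊢
  intro x hx
  obtain ⟨y, hy⟩ := h (φ n x) (by
    dsimp at hx ⊢
    erw [← hφ, hx, map_zero]
    rfl)
  refine ⟨(φ (c'.prev n)).symm y, (φ n).injective ?_⟩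
  dsimp at hy ⊢
  erw [hφ, AddEquiv.apply_symm_apply, hy]

variable {B : Type uB} {C : Type uC} [Category.{vB} B] [Category.{vC} C]
    [Abelian B] [Abelian C]

/-- The adjunction bijection as an additive equivalence. -/
def homAddEquiv {F : B ⥤ C} {G : C ⥤ B} (adj : F ⊣ G) [G.Additive] (X : B) (Y : C) :
    (F.obj X ⟶ Y) ≃+ (X ⟶ G.obj Y) :=
  { adj.homEquiv X Y with
    map_add' := fun f g => by
      simp [Adjunction.homEquiv_unit, Functor.map_add, Preadditive.comp_add] }

lemma homAddEquiv_apply {F : B ⥤ C} {G : C ⥤ B} (adj : F ⊣ G) [G.Additive]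
    (X : B) (Y : C) (f : F.obj X ⟶ Y) :
    homAddEquiv adj X Y f = adj.homEquiv X Y f := rfl

/-- A left adjoint functor which is exact, whose right adjoint preserves epimorphisms and
projective objects, preserves Gorenstein projective objects. -/
lemma gorensteinProjective_map (F : B ⥤ C) (G : C ⥤ B) (adj : F ⊣ G)
    [F.Additive] [G.Additive] [PreservesFiniteLimits F] [PreservesFiniteColimits F]
    [G.PreservesEpimorphisms]
    (hG : ∀ Q : C, Projective Q → Projective (G.obj Q))
    (X : B) (hX : IsGorensteinProjective X) : IsGorensteinProjective (F.obj X) := by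
  obtain ⟨P, hproj, hex, htot, ⟨ι⟩⟩ := hX
  refine ⟨(F.mapHomologicalComplex _).obj P,
    fun n => adj.map_projective _ (hproj n), ?_, ?_, ?_⟩
  · intro n
    rw [HomologicalComplex.exactAt_iff]
    have h1 : ((P.sc n).map F).Exact := (hex n).map F
    exact ShortComplex.exact_of_iso
      (ShortComplex.isoMk (Iso.refl _) (Iso.refl _) (Iso.refl _) ((Category.id_comp _).trans (Category.comp_id _).symm)
        ((Category.id_comp _).trans (Category.comp_id _).symm)) h1
  · intro Q hQ n
    refine exactAt_transfer _
      (((preadditiveYoneda.obj (G.obj Q)).mapHomologicalComplex _).obj P.op)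
      (fun m => homAddEquiv adj (P.X m) Q) ?_ n (htot (G.obj Q) (hG Q hQ) n)
    intro i j x
    exact adj.homEquiv_naturality_left _ _
  · exact ⟨F.mapIso ι ≪≫ PreservesCokernel.iso F _⟩

end AuxGP

/-- Let `(A, B, C)` be a recollement of abelian categories with a
ladder of `l`-height two and `r`-height three.  Then `l` and `e` preserve Gorenstein
projective objects, and the adjunction `l ⊣ e` induces an adjoint pair between the
stable categories `GProj(C)/proj` and `GProj(B)/proj` with the induced `l` fully
faithful; i.e. the adjunction bijection `(l(X) ⟶ Y) ≃ (X ⟶ e(Y))` identifies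
morphisms factoring through projectives on both sides (giving
`Hom̲_B(l X, Y) ≅ Hom̲_C(X, e Y)`), and `l` is fully faithful on stable Hom-groups. -/
theorem stable_adjoint_pair_of_ladder
    {A : Type u₁} {B : Type u₂} {C : Type u₃}
    [Category.{v₁} A] [Category.{v₂} B] [Category.{v₃} C]
    [Abelian A] [Abelian B] [Abelian C]
    [EnoughProjectives B] [EnoughProjectives C]
    (R : AbRecollement A B C)
    -- ladder of `l`-height two
    (l₁ : B ⥤ C) (adj₁₀ : l₁ ⊣ R.l)
    -- ladder of `r`-height three
    (r₁ : B ⥤ C) (r₂ : C ⥤ B)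
    (adj₀₁ : R.r ⊣ r₁) (adj₁₂ : r₁ ⊣ r₂) :
    -- `l` preserves Gorenstein projectives
    (∀ X : C, IsGorensteinProjective X → IsGorensteinProjective (R.l.obj X)) ∧
    -- `e` preserves Gorenstein projectives
    (∀ Y : B, IsGorensteinProjective Y → IsGorensteinProjective (R.e.obj Y)) ∧
    -- the adjunction bijection descends to stable Hom-groups:
    -- `Hom̲_B(l X, Y) ≅ Hom̲_C(X, e Y)`
    (∀ (X : C) (Y : B), IsGorensteinProjective X → IsGorensteinProjective Y →
      ∀ f : R.l.obj X ⟶ Y,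
        (FactorsThroughProjective f ↔
          FactorsThroughProjective ((R.adj_le.homEquiv X Y) f))) ∧
    -- the induced functor `l` on the stable categories is full …
    (∀ (X X' : C), IsGorensteinProjective X → IsGorensteinProjective X' →
      ∀ g : R.l.obj X ⟶ R.l.obj X', ∃ f : X ⟶ X',
        FactorsThroughProjective (R.l.map f - g)) ∧
    -- … and faithful
    (∀ (X X' : C), IsGorensteinProjective X → IsGorensteinProjective X' →
      ∀ f f' : X ⟶ X',
        (FactorsThroughProjective (R.l.map f - R.l.map f') ↔
          FactorsThroughProjective (f - f'))) := by
  -- set up instances coming from the ladder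
  haveI : R.l.IsLeftAdjoint := R.adj_le.isLeftAdjoint
  haveI : R.e.IsLeftAdjoint := R.adj_er.isLeftAdjoint
  haveI : R.r.IsLeftAdjoint := adj₀₁.isLeftAdjoint
  haveI : r₁.IsLeftAdjoint := adj₁₂.isLeftAdjoint
  haveI : PreservesLimitsOfSize.{0,0} R.l := adj₁₀.rightAdjoint_preservesLimits
  haveI : PreservesColimitsOfSize.{0,0} R.l := R.adj_le.leftAdjoint_preservesColimits
  haveI : PreservesLimitsOfSize.{0,0} R.e := R.adj_le.rightAdjoint_preservesLimits
  haveI : PreservesColimitsOfSize.{0,0} R.e := R.adj_er.leftAdjoint_preservesColimits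
  haveI : PreservesLimitsOfSize.{0,0} R.r := R.adj_er.rightAdjoint_preservesLimits
  haveI : PreservesFiniteLimits R.l := PreservesLimitsOfSize.preservesFiniteLimits R.l
  haveI : PreservesFiniteColimits R.l := PreservesColimitsOfSize.preservesFiniteColimits R.l
  haveI : PreservesFiniteLimits R.e := PreservesLimitsOfSize.preservesFiniteLimits R.e
  haveI : PreservesFiniteColimits R.e := PreservesColimitsOfSize.preservesFiniteColimits R.e
  haveI : R.l.Additive := Functor.additive_of_preserves_binary_products R.l
  haveI : R.e.Additive := Functor.additive_of_preserves_binary_products R.e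
  haveI : R.r.Additive := Functor.additive_of_preserves_binary_products R.r
  haveI : R.l.Full := R.l_full
  haveI : R.l.Faithful := R.l_faithful
  -- projectivity preservation
  have hEproj : ∀ Q : B, Projective Q → Projective (R.e.obj Q) :=
    fun Q hQ => R.adj_er.map_projective Q hQ
  have hRproj : ∀ Q : C, Projective Q → Projective (R.r.obj Q) :=
    fun Q hQ => adj₀₁.map_projective Q hQ
  have hLproj : ∀ Q : C, Projective Q → Projective (R.l.obj Q) :=
    fun Q hQ => R.adj_le.map_projective Q hQ
  -- claim 1 : `l` preserves Gorenstein projectives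
  have claim1 : ∀ X : C, IsGorensteinProjective X → IsGorensteinProjective (R.l.obj X) :=
    fun X hX => gorensteinProjective_map R.l R.e R.adj_le hEproj X hX
  -- claim 2 : `e` preserves Gorenstein projectives
  have claim2 : ∀ Y : B, IsGorensteinProjective Y → IsGorensteinProjective (R.e.obj Y) :=
    fun Y hY => gorensteinProjective_map R.e R.r R.adj_er hRproj Y hY
  -- key computation : `homEquiv (l.map f) = f ≫ unit`
  have hkey : ∀ (X X' : C) (f : X ⟶ X'),
      (R.adj_le.homEquiv X (R.l.obj X')) (R.l.map f) = f ≫ R.adj_le.unit.app X' := by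
    intro X X' f
    rw [Adjunction.homEquiv_unit]
    exact R.adj_le.unit_naturality f
  -- claim 3 : compatibility of the adjunction bijection with stable morphisms
  have claim3 : ∀ (X : C) (Y : B), IsGorensteinProjective X → IsGorensteinProjective Y →
      ∀ f : R.l.obj X ⟶ Y,
        (FactorsThroughProjective f ↔
          FactorsThroughProjective ((R.adj_le.homEquiv X Y) f)) := by
    intro X Y _ _ f
    constructor
    · rintro ⟨P, hP, g, h, rfl⟩
      refine ⟨R.e.obj P, hEproj P hP, (R.adj_le.homEquiv X P) g, R.e.map h, ?_⟩
      simp [Adjunction.homEquiv_unit, Functor.map_comp]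
    · rintro ⟨P, hP, g, h, hfact⟩
      refine ⟨R.l.obj P, hLproj P hP, R.l.map g, R.l.map h ≫ R.adj_le.counit.app Y, ?_⟩
      have hf : f = (R.adj_le.homEquiv X Y).symm ((R.adj_le.homEquiv X Y) f) :=
        (Equiv.symm_apply_apply _ _).symm
      rw [hf, hfact, Adjunction.homEquiv_counit, Functor.map_comp, Category.assoc]
  refine ⟨claim1, claim2, claim3, ?_, ?_⟩
  -- claim 4 : fullness
  · intro X X' _ _ g
    refine ⟨(R.adj_le.homEquiv X (R.l.obj X')) g ≫ inv (R.adj_le.unit.app X'), ?_⟩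
    have hg : R.l.map ((R.adj_le.homEquiv X (R.l.obj X')) g ≫ inv (R.adj_le.unit.app X')) = g := by
      apply (R.adj_le.homEquiv X (R.l.obj X')).injective
      rw [hkey, Category.assoc, IsIso.inv_hom_id, Category.comp_id]
    rw [hg, sub_self]
    exact ⟨0, inferInstance, 0, 0, by simp⟩
  -- claim 5 : faithfulness
  · intro X X' hX hX' f f'
    constructor
    · intro h
      have h' : FactorsThroughProjective (R.l.map (f - f')) := by
        rwa [Functor.map_sub]
      obtain ⟨P, hP, g, h2, heq⟩ :=
        (claim3 X (R.l.obj X') hX (claim1 X' hX') (R.l.map (f - f'))).mp h'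
      rw [hkey] at heq
      refine ⟨P, hP, g, h2 ≫ inv (R.adj_le.unit.app X'), ?_⟩
      calc f - f' = ((f - f') ≫ R.adj_le.unit.app X') ≫ inv (R.adj_le.unit.app X') := by
            rw [Category.assoc, IsIso.hom_inv_id, Category.comp_id]
        _ = g ≫ (h2 ≫ inv (R.adj_le.unit.app X')) := by rw [heq, Category.assoc]
    · rintro ⟨P, hP, g, h, heq⟩
      exact ⟨R.l.obj P, hLproj P hP, R.l.map g, R.l.map h, by
        rw [← R.l.map_comp, ← heq, Functor.map_sub]⟩
end
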